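/- arXiv:1408.5839 — 8 statements merged into one kernel-verified Lean document; each statement's English description precedes it below -/
import Mathlib

section
/- Let U : ℝ → [0,∞) be measurable and even with ∫_ℝ U(x) dx < ∞ and ∫_ℝ x²·U(x) dx < ∞. For f ∈ L²(ℝ), the integral (K f)(u) := ∫_ℝ (1/2)·√(U(u))·(|u+u′| − |u−u′|)·√(U(u′))·f(u′) du′ converges absolutely for almost every u, and K f ∈ L²(ℝ) with ‖K f‖_{L²} ≤ 4·( ∫_ℝ U(x) dx · ∫_ℝ x²·U(x) dx )^{1/2} · ‖f‖_{L²}; in other words, the kernel (u,u′) ↦ (1/2)·√(U(u))·(|u+u′|−|u−u′|)·√(U(u′)) defines a bounded operator on L²(ℝ) of operator norm at most 4·(‖U‖_{L¹}·‖x²U(x)‖_{L¹})^{1/2}. -/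
/-!
Since `||u + u'| - |u - u'|| ≤ 2 min(|u|, |u'|) ≤ 2 √(|u| |u'|)`, the kernel is dominated by the
rank-one kernel `g(u) g(u')` with `g = √(|x| U)`. Cauchy–Schwarz then gives
`|K f (u)| ≤ g(u) ‖g‖₂ ‖f‖₂`, hence `‖K f‖₂ ≤ ‖g‖₂² ‖f‖₂ = (∫ |x| U) ‖f‖₂`, and a second
Cauchy–Schwarz, `∫ |x| U = ∫ √U √(x² U) ≤ (∫ U · ∫ x² U)^{1/2}`, bounds the constant.
-/

open MeasureTheory Real

section KernelOperator

variable {α : Type*} [MeasurableSpace α] {μ : Measure α} {k : α → α → ℝ} {g f : α → ℝ}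

lemma lintegral_enorm_kernel_mul_le (hkg : ∀ u u', |k u u'| ≤ g u * g u')
    (hg : AEStronglyMeasurable g μ) (hf : AEStronglyMeasurable f μ) (u : α) :
    ∫⁻ u', ‖k u u' * f u'‖ₑ ∂μ ≤ ‖g u‖ₑ * (eLpNorm g 2 μ * eLpNorm f 2 μ) := by
  have hpoint : ∀ u', ‖k u u' * f u'‖ₑ ≤ ‖g u‖ₑ * ‖(g • f) u'‖ₑ := fun u' => by
    simp only [Pi.smul_apply', smul_eq_mul, enorm_mul, ← mul_assoc]
    gcongr ?_ * _
    rw [← enorm_mul]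
    exact enorm_le_iff_norm_le.mpr ((hkg u u').trans (le_abs_self _))
  calc ∫⁻ u', ‖k u u' * f u'‖ₑ ∂μ ≤ ∫⁻ u', ‖g u‖ₑ * ‖(g • f) u'‖ₑ ∂μ := lintegral_mono hpoint
    _ = ‖g u‖ₑ * eLpNorm (g • f) 1 μ := by
      rw [lintegral_const_mul' _ _ enorm_ne_top, eLpNorm_one_eq_lintegral_enorm]
    _ ≤ ‖g u‖ₑ * (eLpNorm g 2 μ * eLpNorm f 2 μ) := by
      gcongr
      exact eLpNorm_smul_le_mul_eLpNorm hf hg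

theorem kernel_operator_of_abs_le_mul [SFinite μ]
    (hk : AEStronglyMeasurable (Function.uncurry k) (μ.prod μ))
    (hkg : ∀ u u', |k u u'| ≤ g u * g u') (hg : MemLp g 2 μ) (hf : MemLp f 2 μ) :
    (∀ᵐ u ∂μ, Integrable (fun u' => k u u' * f u') μ) ∧
    MemLp (fun u => ∫ u', k u u' * f u' ∂μ) 2 μ ∧
    eLpNorm (fun u => ∫ u', k u u' * f u' ∂μ) 2 μ ≤ eLpNorm g 2 μ ^ 2 * eLpNorm f 2 μ := by
  have hC : eLpNorm g 2 μ * eLpNorm f 2 μ < ⊤ :=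
    ENNReal.mul_lt_top hg.eLpNorm_lt_top hf.eLpNorm_lt_top
  have hkf : AEStronglyMeasurable (fun p : α × α => k p.1 p.2 * f p.2) (μ.prod μ) :=
    hk.mul hf.1.comp_snd
  have hbound : eLpNorm (fun u => ∫ u', k u u' * f u' ∂μ) 2 μ
      ≤ eLpNorm g 2 μ ^ 2 * eLpNorm f 2 μ :=
    calc eLpNorm (fun u => ∫ u', k u u' * f u' ∂μ) 2 μ
        ≤ (eLpNorm g 2 μ * eLpNorm f 2 μ) * eLpNorm g 2 μ := by
          refine eLpNorm_le_mul_eLpNorm_of_ae_le_mul'' 2 hg.1 (.of_forall fun u => ?_)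
          rw [mul_comm]
          exact (enorm_integral_le_lintegral_enorm _).trans
            (lintegral_enorm_kernel_mul_le hkg hg.1 hf.1 u)
      _ = eLpNorm g 2 μ ^ 2 * eLpNorm f 2 μ := by ring
  refine ⟨?_, ⟨hkf.integral_prod_right', hbound.trans_lt ?_⟩, hbound⟩
  · filter_upwards [hkf.prodMk_left] with u hu
    exact ⟨hu, (lintegral_enorm_kernel_mul_le hkg hg.1 hf.1 u).trans_lt
      (ENNReal.mul_lt_top enorm_lt_top hC)⟩
  · exact ENNReal.mul_lt_top (ENNReal.pow_lt_top hg.eLpNorm_lt_top) hf.eLpNorm_lt_top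

end KernelOperator

section SquareRoots

variable {α : Type*} [MeasurableSpace α] {μ : Measure α} {h : α → ℝ}

lemma memLp_two_sqrt (hh0 : ∀ x, 0 ≤ h x) (hh : Integrable h μ) :
    MemLp (fun x => √(h x)) 2 μ := by
  rw [memLp_two_iff_integrable_sq hh.1.aemeasurable.sqrt.aestronglyMeasurable]
  exact hh.congr (.of_forall fun x => (sq_sqrt (hh0 x)).symm)

lemma eLpNorm_sqrt_sq (hh0 : ∀ x, 0 ≤ h x) (hh : Integrable h μ) :
    eLpNorm (fun x => √(h x)) 2 μ ^ 2 = ENNReal.ofReal (∫ x, h x ∂μ) := by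
  have h2 := eLpNorm_nnreal_pow_eq_lintegral (μ := μ) (f := fun x => √(h x)) (p := 2) two_ne_zero
  simp only [NNReal.coe_ofNat, ENNReal.rpow_ofNat, ENNReal.coe_ofNat] at h2
  rw [h2, ofReal_integral_eq_lintegral_ofReal hh (.of_forall hh0)]
  refine lintegral_congr fun x => ?_
  rw [Real.enorm_eq_ofReal (sqrt_nonneg _), ← ENNReal.ofReal_pow (sqrt_nonneg _), sq_sqrt (hh0 x)]

lemma integral_sqrt_mul_sqrt_le {g : α → ℝ} (hh0 : ∀ x, 0 ≤ h x) (hh : Integrable h μ)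
    (hg0 : ∀ x, 0 ≤ g x) (hg : Integrable g μ) :
    ∫ x, √(h x) * √(g x) ∂μ ≤ √(∫ x, h x ∂μ) * √(∫ x, g x ∂μ) := by
  have hHolder := integral_mul_le_Lp_mul_Lq_of_nonneg Real.HolderConjugate.two_two
    (.of_forall fun x => sqrt_nonneg (h x)) (.of_forall fun x => sqrt_nonneg (g x))
    (by simpa using memLp_two_sqrt hh0 hh) (by simpa using memLp_two_sqrt hg0 hg)
  rw [sqrt_eq_rpow (∫ x, h x ∂μ), sqrt_eq_rpow (∫ x, g x ∂μ)]
  simpa [Real.rpow_two, sq_sqrt, hh0, hg0] using hHolder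

end SquareRoots

lemma sq_abs_add_sub_abs_sub_le (a b : ℝ) : (|a + b| - |a - b|) ^ 2 ≤ 4 * (|a| * |b|) := by
  have ha : |(|a + b| - |a - b|)| ≤ 2 * |a| := by
    have h := abs_abs_sub_abs_le_abs_sub (a + b) (b - a)
    rwa [abs_sub_comm b a, show a + b - (b - a) = 2 * a by ring, abs_mul, abs_two] at h
  have hb : |(|a + b| - |a - b|)| ≤ 2 * |b| := by
    have h := abs_abs_sub_abs_le_abs_sub (a + b) (a - b)
    rwa [show a + b - (a - b) = 2 * b by ring, abs_mul, abs_two] at h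
  calc (|a + b| - |a - b|) ^ 2 = |(|a + b| - |a - b|)| * |(|a + b| - |a - b|)| := by
        rw [← sq_abs, sq]
    _ ≤ (2 * |a|) * (2 * |b|) := mul_le_mul ha hb (abs_nonneg _) (by positivity)
    _ = 4 * (|a| * |b|) := by ring

noncomputable def interactionKernel (U : ℝ → ℝ) (u u' : ℝ) : ℝ :=
  (1 / 2) * √(U u) * (|u + u'| - |u - u'|) * √(U u')

lemma abs_interactionKernel_le (U : ℝ → ℝ) (u u' : ℝ) :
    |interactionKernel U u u'| ≤ √(|u| * U u) * √(|u'| * U u') := by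
  have hD : |(|u + u'| - |u - u'|) / 2| ≤ √|u| * √|u'| := by
    rw [← sqrt_mul (abs_nonneg u)]
    apply abs_le_sqrt
    linarith [sq_abs_add_sub_abs_sub_le u u', div_pow (|u + u'| - |u - u'|) 2 2]
  calc |interactionKernel U u u'| = |√(U u) * √(U u') * ((|u + u'| - |u - u'|) / 2)| := by
        rw [interactionKernel]; congr 1; ring
    _ = √(U u) * √(U u') * |(|u + u'| - |u - u'|) / 2| := by
        rw [abs_mul, abs_of_nonneg (by positivity)]
    _ ≤ √(U u) * √(U u') * (√|u| * √|u'|) := by gcongr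
    _ = √(|u| * U u) * √(|u'| * U u') := by
        rw [sqrt_mul (abs_nonneg u), sqrt_mul (abs_nonneg u')]; ring

lemma measurable_uncurry_interactionKernel {U : ℝ → ℝ} (hU : Measurable U) :
    Measurable (Function.uncurry (interactionKernel U)) := by
  unfold interactionKernel Function.uncurry
  fun_prop

theorem stmt2_general
    (U : ℝ → ℝ) (hUmeas : Measurable U) (hUnonneg : ∀ x, 0 ≤ U x)
    (hU1 : Integrable U) (hU2 : Integrable (fun x => x ^ 2 * U x))
    (f : ℝ → ℝ) (hf : MemLp f 2 volume) :
    (∀ᵐ u : ℝ, Integrable (fun u' : ℝ =>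
        (1 / 2) * Real.sqrt (U u) * (|u + u'| - |u - u'|) * Real.sqrt (U u') * f u')) ∧
    MemLp (fun u : ℝ => ∫ u' : ℝ,
        (1 / 2) * Real.sqrt (U u) * (|u + u'| - |u - u'|) * Real.sqrt (U u') * f u') 2 volume ∧
    eLpNorm (fun u : ℝ => ∫ u' : ℝ,
        (1 / 2) * Real.sqrt (U u) * (|u + u'| - |u - u'|) * Real.sqrt (U u') * f u') 2 volume
      ≤ ENNReal.ofReal (4 * Real.sqrt ((∫ x : ℝ, U x) * (∫ x : ℝ, x ^ 2 * U x)))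
          * eLpNorm f 2 volume := by
  have hx2U0 : ∀ x : ℝ, 0 ≤ x ^ 2 * U x := fun x => mul_nonneg (sq_nonneg x) (hUnonneg x)
  have hxU0 : ∀ x, 0 ≤ |x| * U x := fun x => mul_nonneg (abs_nonneg x) (hUnonneg x)
  have hxU_eq : ∀ x : ℝ, |x| * U x = √(U x) * √(x ^ 2 * U x) := fun x => by
    rw [sqrt_mul (sq_nonneg x), sqrt_sq_eq_abs, mul_left_comm, mul_self_sqrt (hUnonneg x)]
  have hxU : Integrable (fun x => |x| * U x) := by
    simp_rw [hxU_eq]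
    exact (memLp_two_sqrt hUnonneg hU1).integrable_mul (memLp_two_sqrt hx2U0 hU2)
  obtain ⟨hint, hmem, hnorm⟩ := kernel_operator_of_abs_le_mul
    (measurable_uncurry_interactionKernel hUmeas).aestronglyMeasurable
    (abs_interactionKernel_le U) (memLp_two_sqrt hxU0 hxU) hf
  refine ⟨hint, hmem, hnorm.trans ?_⟩
  rw [eLpNorm_sqrt_sq hxU0 hxU]
  gcongr
  calc ∫ x, |x| * U x = ∫ x, √(U x) * √(x ^ 2 * U x) := by simp_rw [hxU_eq]
    _ ≤ √(∫ x, U x) * √(∫ x, x ^ 2 * U x) := integral_sqrt_mul_sqrt_le hUnonneg hU1 hx2U0 hU2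
    _ ≤ 4 * √((∫ x, U x) * ∫ x, x ^ 2 * U x) := by
        rw [sqrt_mul (integral_nonneg hUnonneg)]
        linarith [mul_nonneg (sqrt_nonneg (∫ x, U x)) (sqrt_nonneg (∫ x, x ^ 2 * U x))]

/-- The kernel `(u,u') ↦ ½·√U(u)·(|u+u'| − |u−u'|)·√U(u')` defines a
bounded operator on `L²(ℝ)` with operator norm at most `4·(‖U‖₁·‖x²U‖₁)^{1/2}`. -/
theorem stmt2
    (U : ℝ → ℝ) (hUmeas : Measurable U) (hUnonneg : ∀ x, 0 ≤ U x)
    (hUeven : ∀ x, U (-x) = U x)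
    (hU1 : Integrable U) (hU2 : Integrable (fun x => x ^ 2 * U x))
    (f : ℝ → ℝ) (hf : MemLp f 2 volume) :
    (∀ᵐ u : ℝ, Integrable (fun u' : ℝ =>
        (1 / 2) * Real.sqrt (U u) * (|u + u'| - |u - u'|) * Real.sqrt (U u') * f u')) ∧
    MemLp (fun u : ℝ => ∫ u' : ℝ,
        (1 / 2) * Real.sqrt (U u) * (|u + u'| - |u - u'|) * Real.sqrt (U u') * f u') 2 volume ∧
    eLpNorm (fun u : ℝ => ∫ u' : ℝ,
        (1 / 2) * Real.sqrt (U u) * (|u + u'| - |u - u'|) * Real.sqrt (U u') * f u') 2 volume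
      ≤ ENNReal.ofReal (4 * Real.sqrt ((∫ x : ℝ, U x) * (∫ x : ℝ, x ^ 2 * U x)))
          * eLpNorm f 2 volume :=
  stmt2_general U hUmeas hUnonneg hU1 hU2 f hf
end

section
/- For all real numbers u and u′, the function x ↦ sin(πxu)·sin(πxu′)/(π²x²) (extended by its limit u·u′ at x = 0) is Lebesgue integrable on ℝ, and ∫_ℝ sin(πxu)·sin(πxu′)/(π²x²) dx = (1/2)·( |u+u′| − |u−u′| ). -/
/-!
For `a ≥ 0` the function `sin (π x a) ^ 2 / (π x) ^ 2` is the Fourier transform of the triangle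
function `max (a - |t|) 0`, so Fourier inversion at `0` gives `∫ sin (π x a) ^ 2 / (π x) ^ 2 = a`.
The general case follows by polarization: `sin A sin B = sin² ((A + B) / 2) - sin² ((A - B) / 2)`.
-/

open Real MeasureTheory Set
open scoped FourierTransform

theorem sin_mul_sin_eq_sin_sq_sub_sin_sq (x y : ℝ) :
    sin x * sin y = sin ((x + y) / 2) ^ 2 - sin ((x - y) / 2) ^ 2 := by
  rw [sin_sq, sin_sq, cos_sq, cos_sq, mul_div_cancel₀ _ two_ne_zero,
    mul_div_cancel₀ _ two_ne_zero]
  linarith [two_mul_sin_mul_sin x y]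

noncomputable def triangle (a t : ℝ) : ℝ := max (a - |t|) 0

theorem continuous_triangle (a : ℝ) : Continuous (triangle a) := by
  unfold triangle; fun_prop

theorem triangle_eq_zero {a t : ℝ} (ht : a ≤ |t|) : triangle a t = 0 :=
  max_eq_right (by linarith)

theorem hasCompactSupport_triangle (a : ℝ) : HasCompactSupport (triangle a) :=
  HasCompactSupport.intro (isCompact_Icc (a := -a) (b := a)) fun t ht =>
    triangle_eq_zero (by
      rw [mem_Icc, not_and_or, not_le, not_le] at ht
      rcases ht with h | h <;> cases abs_cases t <;> linarith)

theorem triangle_neg (a t : ℝ) : triangle a (-t) = triangle a t := by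
  rw [triangle, abs_neg, triangle]

theorem intervalIntegral_sub_mul_cos {a c : ℝ} (hc : c ≠ 0) :
    ∫ s in (0 : ℝ)..a, (a - s) * cos (c * s) = (1 - cos (c * a)) / c ^ 2 := by
  have hderiv (s : ℝ) : HasDerivAt (fun s => (a - s) * sin (c * s) / c - cos (c * s) / c ^ 2)
      ((a - s) * cos (c * s)) s := by
    have hcs : HasDerivAt (fun s => c * s) c s := by simpa using (hasDerivAt_id s).const_mul c
    refine (((((hasDerivAt_id' s).const_sub a).mul hcs.sin).div_const c).sub
      (hcs.cos.div_const (c ^ 2))).congr_deriv ?_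
    field_simp
    ring
  rw [intervalIntegral.integral_eq_sub_of_hasDerivAt (fun s _ => hderiv s)
    (by apply Continuous.intervalIntegrable; fun_prop)]
  simp only [sub_self, zero_mul, zero_div, zero_sub, sub_zero, mul_zero, sin_zero, cos_zero]
  ring

theorem integral_triangle_mul_cos {a c : ℝ} (ha : 0 ≤ a) (hc : c ≠ 0) :
    ∫ t, triangle a t * cos (c * t) = 2 * (1 - cos (c * a)) / c ^ 2 := by
  have heven (t : ℝ) : triangle a t * cos (c * t) = triangle a |t| * cos (c * |t|) := by
    rcases abs_cases t with ⟨h, _⟩ | ⟨h, _⟩ <;> rw [h]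
    rw [mul_neg, cos_neg, triangle_neg]
  have hvanish : ∀ t ∈ Ioi 0 \ Ioc 0 a, triangle a t * cos (c * t) = 0 := by
    rintro t ⟨ht₀, hta⟩
    have : a < t := not_le.1 fun h => hta ⟨ht₀, h⟩
    rw [triangle_eq_zero (by rw [abs_of_pos ht₀]; linarith), zero_mul]
  have hlinear : EqOn (fun t => triangle a t * cos (c * t)) (fun s => (a - s) * cos (c * s))
      (uIcc 0 a) := by
    intro s hs
    rw [uIcc_of_le ha] at hs
    dsimp only
    rw [triangle, abs_of_nonneg hs.1, max_eq_left (by linarith [hs.2])]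
  calc ∫ t, triangle a t * cos (c * t)
      = 2 * ∫ t in Ioi 0, triangle a t * cos (c * t) := by
        simpa only [← heven] using integral_comp_abs (f := fun t => triangle a t * cos (c * t))
    _ = 2 * ∫ s in (0 : ℝ)..a, (a - s) * cos (c * s) := by
        rw [setIntegral_eq_of_subset_of_forall_sdiff_eq_zero measurableSet_Ioi Ioc_subset_Ioi_self
          hvanish, ← intervalIntegral.integral_of_le ha, intervalIntegral.integral_congr hlinear]
    _ = 2 * (1 - cos (c * a)) / c ^ 2 := by
        rw [intervalIntegral_sub_mul_cos hc]
        ring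

theorem integral_triangle_mul_sin (a c : ℝ) : ∫ t, triangle a t * sin (c * t) = 0 := by
  have hodd := integral_neg_eq_self (fun t => triangle a t * sin (c * t)) volume
  simp only [mul_neg, sin_neg, triangle_neg, integral_neg] at hodd
  linarith

theorem fourier_triangle {a x : ℝ} (ha : 0 ≤ a) (hx : x ≠ 0) :
    𝓕 (fun t => (triangle a t : ℂ)) x = ((sin (π * x * a) ^ 2 / (π ^ 2 * x ^ 2) : ℝ) : ℂ) := by
  set c := 2 * π * x with hc
  have hc0 : c ≠ 0 := by positivity
  have hexp (t : ℝ) : Complex.exp (↑(-2 * π * t * x) * Complex.I) • (triangle a t : ℂ) =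
      ↑(triangle a t * cos (c * t)) - ↑(triangle a t * sin (c * t)) * Complex.I := by
    rw [show -2 * π * t * x = -(c * t) by ring, Complex.exp_mul_I, smul_eq_mul]
    push_cast
    rw [Complex.cos_neg, Complex.sin_neg]
    ring
  have hint (f : ℝ → ℝ) (hf : Continuous f) : Integrable fun t => (↑(triangle a t * f t) : ℂ) :=
    (((continuous_triangle a).mul hf).integrable_of_hasCompactSupport
      (hasCompactSupport_triangle a).mul_right).ofReal
  rw [Real.fourier_real_eq_integral_exp_smul]
  simp_rw [hexp]
  rw [integral_sub (hint _ (by fun_prop)) ((hint _ (by fun_prop)).mul_const _), integral_mul_const,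
    integral_complex_ofReal, integral_complex_ofReal, integral_triangle_mul_cos ha hc0,
    integral_triangle_mul_sin, show c * a = 2 * (π * x * a) by ring, cos_two_mul, cos_sq', hc]
  push_cast
  field_simp
  ring

noncomputable def sinProdKernel (u u' x : ℝ) : ℝ :=
  if x = 0 then u * u' else sin (π * x * u) * sin (π * x * u') / (π ^ 2 * x ^ 2)

theorem sinProdKernel_eq_sub (u u' : ℝ) :
    sinProdKernel u u' = sinProdKernel ((u + u') / 2) ((u + u') / 2) -
      sinProdKernel ((u - u') / 2) ((u - u') / 2) := by
  ext x
  rcases eq_or_ne x 0 with rfl | hx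
  · simp only [sinProdKernel, if_true, Pi.sub_apply]
    ring
  · simp only [sinProdKernel, if_neg hx, Pi.sub_apply, sin_mul_sin_eq_sin_sq_sub_sin_sq,
      ← sq]
    ring_nf

theorem sinProdKernel_neg_neg (u u' : ℝ) : sinProdKernel (-u) (-u') = sinProdKernel u u' := by
  ext x
  simp [sinProdKernel, mul_neg, sin_neg]

theorem norm_sinProdKernel_self_le (a x : ℝ) :
    ‖sinProdKernel a a x‖ ≤ 2 * (a ^ 2 + 1) * (1 + x ^ 2)⁻¹ := by
  rcases eq_or_ne x 0 with rfl | hx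
  · simp only [sinProdKernel, if_true, ← sq, norm_of_nonneg (sq_nonneg a)]
    norm_num
    nlinarith [sq_nonneg a]
  have hden : 0 < π ^ 2 * x ^ 2 := by positivity
  rw [sinProdKernel, if_neg hx, ← sq, norm_of_nonneg (by positivity), ← div_eq_mul_inv,
    div_le_div_iff₀ hden (by positivity)]
  have hπ : 1 ≤ π ^ 2 := by nlinarith [pi_gt_three]
  rcases le_or_gt (x ^ 2) 1 with hx1 | hx1
  · have := sin_sq_le_sq (x := π * x * a)
    nlinarith [sq_nonneg a, sq_nonneg (π * x)]
  · have := sin_sq_le_one (π * x * a)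
    nlinarith [sq_nonneg a, sq_nonneg x]

theorem integrable_sinProdKernel_self (a : ℝ) : Integrable (sinProdKernel a a) :=
  (integrable_inv_one_add_sq.const_mul _).mono'
    (Measurable.ite measurableSet_eq measurable_const (by fun_prop)).aestronglyMeasurable
    (ae_of_all _ (norm_sinProdKernel_self_le a))

theorem integral_sinProdKernel_self_of_nonneg {a : ℝ} (ha : 0 ≤ a) :
    ∫ x, sinProdKernel a a x = a := by
  set f : ℝ → ℂ := fun t => (triangle a t : ℂ)
  have hFf : 𝓕 f =ᵐ[volume] fun x => (sinProdKernel a a x : ℂ) := by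
    filter_upwards [Measure.ae_ne volume 0] with x hx
    rw [fourier_triangle ha hx, sinProdKernel, if_neg hx, sq]
  have hf : Integrable f :=
    ((continuous_triangle a).integrable_of_hasCompactSupport (hasCompactSupport_triangle a)).ofReal
  have hinv := hf.fourierInv_fourier_eq ((integrable_sinProdKernel_self a).ofReal.congr hFf.symm)
    (Complex.continuous_ofReal.comp (continuous_triangle a)).continuousAt (v := 0)
  have hinv_zero : 𝓕⁻ (𝓕 f) 0 = ∫ x, 𝓕 f x := by simp [Real.fourierInv_eq]
  rw [hinv_zero, integral_congr_ae hFf, integral_complex_ofReal] at hinv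
  simpa [f, triangle, ha] using hinv

theorem integral_sinProdKernel_self (a : ℝ) : ∫ x, sinProdKernel a a x = |a| := by
  rcases le_total 0 a with ha | ha
  · rw [abs_of_nonneg ha, integral_sinProdKernel_self_of_nonneg ha]
  · rw [abs_of_nonpos ha, ← integral_sinProdKernel_self_of_nonneg (neg_nonneg.2 ha),
      sinProdKernel_neg_neg]

theorem stmt3 (u u' : ℝ) :
    MeasureTheory.Integrable (fun x : ℝ =>
      if x = 0 then u * u'
      else Real.sin (π * x * u) * Real.sin (π * x * u') / (π ^ 2 * x ^ 2)) ∧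
    (∫ x : ℝ,
      if x = 0 then u * u'
      else Real.sin (π * x * u) * Real.sin (π * x * u') / (π ^ 2 * x ^ 2))
      = (1 / 2) * (|u + u'| - |u - u'|) := by
  change Integrable (sinProdKernel u u') ∧ ∫ x, sinProdKernel u u' x = _
  rw [sinProdKernel_eq_sub]
  refine ⟨(integrable_sinProdKernel_self _).sub (integrable_sinProdKernel_self _), ?_⟩
  rw [integral_sub' (integrable_sinProdKernel_self _) (integrable_sinProdKernel_self _),
    integral_sinProdKernel_self, integral_sinProdKernel_self, abs_div, abs_div, abs_two]
  ring
end

section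
/- Let U : ℝ → [0,∞) be measurable with ∫_ℝ x²·U(x) dx < ∞. Define φ₀(x,y) := √2·(sin(πx)·sin(2πy) − sin(2πx)·sin(πy)). For ℓ > 0 define f_ℓ : ℝ×[0,1] → ℝ by f_ℓ(u,y) := ℓ·√(U(u))·φ₀(y + u/ℓ, y) whenever 0 ≤ y + u/ℓ ≤ 1, and f_ℓ(u,y) := 0 otherwise; and let g(u,y) := u·√(U(u))·(π/√2)·(3·sin(πy) − sin(3πy)). Then ∫_{ℝ×[0,1]} |f_ℓ(u,y) − g(u,y)|² du dy → 0 as ℓ → ∞. -/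
/-!
Dominated convergence in `L²`. Since `φ₀` vanishes on the diagonal, `ℓ·φ₀(y + u/ℓ, y)` is `u` times
a difference quotient of `φ₀(·, y)` at `y`, so for `0 < y < 1` it tends to `u·∂₁φ₀(y, y)`, and a
trigonometric identity identifies `∂₁φ₀(y, y)` with `(π/√2)(3 sin πy − sin 3πy)`. The Lipschitz
bound `|φ₀(x, y)| ≤ 3√2π|x − y|` dominates both `f_ℓ` and `g` by a multiple of `|u|·√U(u)`, whose
square is integrable by the second-moment assumption on `U`.
-/

open MeasureTheory Real Filter Set Topology

theorem HasDerivAt.tendsto_mul_comp_add_div_atTop {f : ℝ → ℝ} {f' y : ℝ} (hf : HasDerivAt f f' y)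
    (hy : f y = 0) (u : ℝ) :
    Tendsto (fun ℓ : ℝ => ℓ * f (y + u / ℓ)) atTop (𝓝 (u * f')) := by
  have hline : HasDerivAt (fun t : ℝ => y + u * t) u 0 := by
    simpa using ((hasDerivAt_id (0 : ℝ)).const_mul u).const_add y
  have hψ : HasDerivAt (fun t => f (y + u * t)) (f' * u) 0 := by
    have hf0 : HasDerivAt f f' (y + u * 0) := by rwa [mul_zero, add_zero]
    exact hf0.comp 0 hline
  have hinv : Tendsto (fun ℓ : ℝ => ℓ⁻¹) atTop (𝓝[≠] 0) :=
    tendsto_nhdsWithin_mono_right (fun _ h => ne_of_gt h) tendsto_inv_atTop_nhdsGT_zero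
  rw [mul_comm u]
  refine ((hasDerivAt_iff_tendsto_slope.mp hψ).comp hinv).congr' ?_
  filter_upwards [eventually_ne_atTop 0] with ℓ hℓ
  simp [slope_def_field, hy, div_eq_mul_inv, mul_comm]

theorem tendsto_integral_sq_sub_of_dominated {α : Type*} [MeasurableSpace α] {μ : Measure α}
    {l : Filter ℝ} [l.IsCountablyGenerated] {F : ℝ → α → ℝ} {G h : α → ℝ}
    (hF_meas : ∀ᶠ ℓ in l, AEStronglyMeasurable (F ℓ) μ) (hG_meas : AEStronglyMeasurable G μ)
    (hh : Integrable (fun a => h a ^ 2) μ)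
    (hF_le : ∀ᶠ ℓ in l, ∀ᵐ a ∂μ, |F ℓ a| ≤ h a) (hG_le : ∀ᵐ a ∂μ, |G a| ≤ h a)
    (hlim : ∀ᵐ a ∂μ, Tendsto (fun ℓ => F ℓ a) l (𝓝 (G a))) :
    Tendsto (fun ℓ => ∫ a, (F ℓ a - G a) ^ 2 ∂μ) l (𝓝 0) := by
  rw [← integral_zero α ℝ (μ := μ)]
  refine tendsto_integral_filter_of_dominated_convergence (fun a => 4 * h a ^ 2) ?_ ?_
    (hh.const_mul 4) ?_
  · filter_upwards [hF_meas] with ℓ hℓ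
    exact (hℓ.sub hG_meas).pow 2
  · filter_upwards [hF_le] with ℓ hℓ
    filter_upwards [hℓ, hG_le] with a hFa hGa
    have hdiff : |F ℓ a - G a| ≤ 2 * h a := (abs_sub _ _).trans (by linarith)
    calc ‖(F ℓ a - G a) ^ 2‖ = |F ℓ a - G a| ^ 2 := by rw [norm_pow, norm_eq_abs]
      _ ≤ (2 * h a) ^ 2 := pow_le_pow_left₀ (abs_nonneg _) hdiff 2
      _ = 4 * h a ^ 2 := by ring
  · filter_upwards [hlim] with a ha
    simpa using (ha.sub_const (G a)).pow 2

/-- `φ₀`. -/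
noncomputable def slater (x y : ℝ) : ℝ :=
  √2 * (sin (π * x) * sin (2 * π * y) - sin (2 * π * x) * sin (π * y))

noncomputable def slaterSlope (y : ℝ) : ℝ := π / √2 * (3 * sin (π * y) - sin (3 * π * y))

theorem slater_self (y : ℝ) : slater y y = 0 := by
  simp [slater, mul_comm]

theorem abs_sin_const_mul_sub_sin_const_mul_le (c x y : ℝ) (hc : 0 ≤ c) :
    |sin (c * x) - sin (c * y)| ≤ c * |x - y| := by
  simpa [← mul_sub, abs_mul, abs_of_nonneg hc] using abs_sin_sub_sin_le (c * x) (c * y)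

theorem abs_slater_le (x y : ℝ) : |slater x y| ≤ 3 * √2 * π * |x - y| := by
  have h1 := abs_sin_const_mul_sub_sin_const_mul_le π x y pi_pos.le
  have h2 := abs_sin_const_mul_sub_sin_const_mul_le (2 * π) x y (by positivity)
  have hsplit : slater x y = √2 * (sin (2 * π * y) * (sin (π * x) - sin (π * y))
      - sin (π * y) * (sin (2 * π * x) - sin (2 * π * y))) := by
    unfold slater; ring
  have hmul : ∀ s z : ℝ, |sin s * z| ≤ |z| := fun s z => by
    rw [abs_mul]; exact mul_le_of_le_one_left (abs_nonneg z) (abs_sin_le_one s)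
  rw [hsplit, abs_mul, abs_of_nonneg (sqrt_nonneg 2)]
  calc √2 * |sin (2 * π * y) * (sin (π * x) - sin (π * y))
        - sin (π * y) * (sin (2 * π * x) - sin (2 * π * y))|
      ≤ √2 * (π * |x - y| + 2 * π * |x - y|) := by
        gcongr
        exact (abs_sub _ _).trans (add_le_add ((hmul _ _).trans h1) ((hmul _ _).trans h2))
    _ = 3 * √2 * π * |x - y| := by ring

theorem abs_slaterSlope_le (y : ℝ) : |slaterSlope y| ≤ 3 * √2 * π := by
  have hsin : |3 * sin (π * y) - sin (3 * π * y)| ≤ 4 := by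
    have := abs_sin_le_one (π * y)
    have := abs_sin_le_one (3 * π * y)
    calc _ ≤ |3 * sin (π * y)| + |sin (3 * π * y)| := abs_sub _ _
      _ ≤ 4 := by rw [abs_mul, abs_of_pos three_pos]; linarith
  have h2 : √2 * √2 = 2 := mul_self_sqrt zero_le_two
  rw [slaterSlope, abs_mul, abs_of_pos (by positivity)]
  calc π / √2 * |3 * sin (π * y) - sin (3 * π * y)| ≤ π / √2 * 4 := by gcongr
    _ ≤ 3 * √2 * π := by
      rw [div_mul_eq_mul_div, div_le_iff₀ (by positivity)]
      nlinarith [pi_pos]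

theorem hasDerivAt_slater_diag (y : ℝ) :
    HasDerivAt (fun x => slater x y) (slaterSlope y) y := by
  have h1 := ((hasDerivAt_id y).const_mul π).sin
  have h2 := ((hasDerivAt_id y).const_mul (2 * π)).sin
  refine (((h1.mul_const (sin (2 * π * y))).sub
    (h2.mul_const (sin (π * y)))).const_mul √2).congr_deriv ?_
  have hsqrt : √2 ^ 2 = 2 := sq_sqrt zero_le_two
  have h3 : 3 * π * y = 3 * (π * y) := by ring
  have h4 : 2 * π * y = 2 * (π * y) := by ring
  simp only [slaterSlope, id, mul_one, h3, h4, sin_three_mul, sin_two_mul, cos_two_mul, cos_sq']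
  -- both sides equal `2√2π sin³(πy)`
  field_simp
  linear_combination (2 * sin (π * y) * (cos (π * y) ^ 2 - 1 + 2 * sin (π * y) ^ 2)) * hsqrt
    + 4 * sin (π * y) * sin_sq_add_cos_sq (π * y)

/-- `f_ℓ`, with `q = (u, y)`. -/
noncomputable def rescaledProfile (U : ℝ → ℝ) (ℓ : ℝ) (q : ℝ × ℝ) : ℝ :=
  if 0 ≤ q.2 + q.1 / ℓ ∧ q.2 + q.1 / ℓ ≤ 1 then ℓ * √(U q.1) * slater (q.2 + q.1 / ℓ) q.2 else 0

theorem measurable_rescaledProfile {U : ℝ → ℝ} (hU : Measurable U) (ℓ : ℝ) :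
    Measurable (rescaledProfile U ℓ) := by
  unfold rescaledProfile slater
  refine Measurable.ite ?_ (by fun_prop) measurable_const
  measurability

theorem abs_rescaledProfile_le (U : ℝ → ℝ) {ℓ : ℝ} (hℓ : 0 < ℓ) (q : ℝ × ℝ) :
    |rescaledProfile U ℓ q| ≤ 3 * √2 * π * (|q.1| * √(U q.1)) := by
  unfold rescaledProfile
  split_ifs
  · have hlip := abs_slater_le (q.2 + q.1 / ℓ) q.2
    rw [add_sub_cancel_left, abs_div, abs_of_pos hℓ] at hlip
    rw [abs_mul, abs_mul, abs_of_pos hℓ, abs_of_nonneg (sqrt_nonneg _)]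
    calc ℓ * √(U q.1) * |slater (q.2 + q.1 / ℓ) q.2|
        ≤ ℓ * √(U q.1) * (3 * √2 * π * (|q.1| / ℓ)) := by gcongr
      _ = 3 * √2 * π * (|q.1| * √(U q.1)) := by field_simp
  · rw [abs_zero]
    positivity

theorem tendsto_rescaledProfile (U : ℝ → ℝ) {q : ℝ × ℝ} (hq : q.2 ∈ Ioo 0 1) :
    Tendsto (fun ℓ => rescaledProfile U ℓ q) atTop (𝓝 (q.1 * √(U q.1) * slaterSlope q.2)) := by
  have hslope :=
    (hasDerivAt_slater_diag q.2).tendsto_mul_comp_add_div_atTop (slater_self q.2) q.1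
  have hinside : ∀ᶠ ℓ in atTop, q.2 + q.1 / ℓ ∈ Ioo 0 1 := by
    have : Tendsto (fun ℓ : ℝ => q.2 + q.1 / ℓ) atTop (𝓝 q.2) := by
      simpa using tendsto_const_nhds.add (tendsto_const_nhds.div_atTop (tendsto_id (α := ℝ)))
    exact this (Ioo_mem_nhds hq.1 hq.2)
  rw [show q.1 * √(U q.1) * slaterSlope q.2 = √(U q.1) * (q.1 * slaterSlope q.2) by ring]
  refine (hslope.const_mul √(U q.1)).congr' ?_
  filter_upwards [hinside] with ℓ hℓ
  rw [rescaledProfile, if_pos ⟨hℓ.1.le, hℓ.2.le⟩]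
  ring

/-- The rescaled profile `f_ℓ(u,y) = ℓ·√U(u)·φ₀(y+u/ℓ, y)` of the
free two-fermion ground state `φ₀` converges in `L²(ℝ×[0,1])` to
`g(u,y) = u·√U(u)·(π/√2)·(3 sin(πy) − sin(3πy))` as `ℓ → ∞`. -/
theorem stmt5
    (U : ℝ → ℝ) (hUmeas : Measurable U) (hUnonneg : ∀ x, 0 ≤ U x)
    (hU2 : Integrable (fun x => x ^ 2 * U x)) :
    Tendsto (fun ℓ : ℝ =>
      ∫ q in (Set.univ ×ˢ Set.Icc (0:ℝ) 1 : Set (ℝ × ℝ)),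
        ((if 0 ≤ q.2 + q.1 / ℓ ∧ q.2 + q.1 / ℓ ≤ 1 then
            ℓ * Real.sqrt (U q.1) *
              (Real.sqrt 2 * (Real.sin (π * (q.2 + q.1 / ℓ)) * Real.sin (2 * π * q.2)
                - Real.sin (2 * π * (q.2 + q.1 / ℓ)) * Real.sin (π * q.2)))
          else 0)
         - q.1 * Real.sqrt (U q.1) * (π / Real.sqrt 2)
             * (3 * Real.sin (π * q.2) - Real.sin (3 * π * q.2))) ^ 2)
      atTop (nhds 0) := by
  have hμ : (volume : Measure (ℝ × ℝ)).restrict (univ ×ˢ Icc 0 1)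
      = volume.prod (volume.restrict (Icc 0 1)) := by
    rw [Measure.volume_eq_prod, ← Measure.prod_restrict, Measure.restrict_univ]
  have hinterior : ∀ᵐ q : ℝ × ℝ ∂volume.prod (volume.restrict (Icc 0 1)), q.2 ∈ Ioo 0 1 :=
    Measure.quasiMeasurePreserving_snd.ae
      (ae_restrict_of_ae_eq_of_ae_restrict Ioo_ae_eq_Icc (ae_restrict_mem measurableSet_Ioo))
  have hbound_sq : Integrable (fun q : ℝ × ℝ => (3 * √2 * π * (|q.1| * √(U q.1))) ^ 2)
      (volume.prod (volume.restrict (Icc 0 1))) := by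
    refine ((hU2.const_mul (18 * π ^ 2)).comp_fst _).congr (.of_forall fun q => ?_)
    simp only [mul_pow, sq_abs, sq_sqrt zero_le_two, sq_sqrt (hUnonneg q.1)]
    ring
  have hL2 := tendsto_integral_sq_sub_of_dominated (F := rescaledProfile U)
    (G := fun q => q.1 * √(U q.1) * slaterSlope q.2)
    (.of_forall fun ℓ => (measurable_rescaledProfile hUmeas ℓ).aestronglyMeasurable)
    (by unfold slaterSlope; fun_prop) hbound_sq
    (eventually_gt_atTop 0 |>.mono fun ℓ hℓ => .of_forall (abs_rescaledProfile_le U hℓ))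
    (.of_forall fun q => by
      rw [abs_mul, abs_mul, abs_of_nonneg (sqrt_nonneg _)]
      exact (mul_le_mul_of_nonneg_left (abs_slaterSlope_le q.2) (by positivity)).trans_eq
        (by ring))
    (hinterior.mono fun q hq => tendsto_rescaledProfile U hq)
  rw [hμ]
  simpa only [rescaledProfile, slater, slaterSlope, mul_assoc] using hL2
end

section
/- There exists a universal constant C > 0 such that for every integer k ≥ 1, every ℓ > 0 and all u, u′ ∈ [−ℓ, ℓ]: | L_k^ℓ(u,u′) − (1/4)·( |u+u′| − |u−u′| ) | ≤ C·k·|u|·|u′| / ℓ, where L_k^ℓ(u,u′) := ℓ · Σ_{j ≥ 1, (j,k) ≠ (1,1)} sin(π(2j+k)u/(2ℓ))·sin(π(2j+k)u′/(2ℓ)) / ( π²·(j + k/2)² ) (the series converges absolutely). -/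
/-!
Put `x = πu/(2ℓ)`, `y = πu'/(2ℓ)`, so `|x|, |y| ≤ π/2`. Writing `n = 2j + k`, the `j`-th term of
`L_k^ℓ / ℓ` is `(4/π²) sin(nx) sin(ny)/n²`: up to the factor `4ℓ/π²`, `L_k^ℓ` is a tail, starting at
`n = k + 2` (at `n = 5` if `k = 1`), of the series `∑ sin(nx) sin(ny)/n²` restricted to the parity
class of `k`. From `∑ cos(nθ)/n² = π²/6 − πθ/2 + θ²/4` on `[0, 2π]`, each parity class sums to
`(π/8)(|x+y| − |x−y|)` up to `xy/2`, and `(4ℓ/π²)(π/8)(|x+y| − |x−y|)` is the limit kernel. Each of the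
`O(k)` omitted terms is at most `|x||y|` by `|sin t| ≤ |t|`, and `(4ℓ/π²)|x||y| = |u||u'|/ℓ`.
-/

open Real Finset

theorem hasSum_cos_nat_mul_div_sq {θ : ℝ} (h0 : 0 ≤ θ) (h2 : θ ≤ 2 * π) :
    HasSum (fun n : ℕ => cos (n * θ) / n ^ 2) (π ^ 2 / 6 - π * θ / 2 + θ ^ 2 / 4) := by
  have hθ : θ / (2 * π) ∈ Set.Icc (0 : ℝ) 1 :=
    ⟨by positivity, div_le_one_of_le₀ h2 (by positivity)⟩
  convert hasSum_one_div_nat_pow_mul_cos one_ne_zero hθ using 1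
  · ext n
    field_simp
    norm_num
  · rw [← bernoulliFun, mul_one, bernoulliFun_two, Nat.factorial_two, Nat.cast_two]
    field_simp
    ring

noncomputable def sinSinCoeff (x y : ℝ) (n : ℕ) : ℝ := sin (n * x) * sin (n * y) / n ^ 2

theorem cos_nat_mul_abs (n : ℕ) (z : ℝ) : cos (n * |z|) = cos (n * z) := by
  rcases abs_choice z with h | h <;> rw [h]
  rw [mul_neg, cos_neg]

theorem hasSum_sinSinCoeff {x y : ℝ} (h : |x| + |y| ≤ 2 * π) :
    HasSum (sinSinCoeff x y) (π / 4 * (|x + y| - |x - y|) - x * y / 2) := by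
  have hsub := hasSum_cos_nat_mul_div_sq (abs_nonneg (x - y)) ((abs_sub x y).trans h)
  have hadd := hasSum_cos_nat_mul_div_sq (abs_nonneg (x + y)) ((abs_add_le x y).trans h)
  have hterm : ∀ n : ℕ, (cos (n * |x - y|) / n ^ 2 - cos (n * |x + y|) / n ^ 2) / 2
      = sinSinCoeff x y n := fun n => by
    rw [sinSinCoeff, cos_nat_mul_abs, cos_nat_mul_abs, ← sub_div, cos_sub_cos, mul_sub, mul_add,
      show (n * x - n * y + (n * x + n * y)) / 2 = n * x by ring,
      show (n * x - n * y - (n * x + n * y)) / 2 = -(n * y) by ring, sin_neg]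
    ring
  have hsum : (π ^ 2 / 6 - π * |x - y| / 2 + |x - y| ^ 2 / 4
      - (π ^ 2 / 6 - π * |x + y| / 2 + |x + y| ^ 2 / 4)) / 2
      = π / 4 * (|x + y| - |x - y|) - x * y / 2 := by
    rw [sq_abs, sq_abs]
    ring
  simpa only [hterm, hsum] using (hsub.sub hadd).div_const 2

theorem hasSum_sinSinCoeff_even {x y : ℝ} (h : |x| + |y| ≤ π) :
    HasSum (fun m : ℕ => sinSinCoeff x y (2 * m)) (π / 8 * (|x + y| - |x - y|) - x * y / 2) := by
  have h2 : |2 * x| + |2 * y| ≤ 2 * π := by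
    rw [abs_mul, abs_mul, abs_two]
    linarith
  have hterm : ∀ m : ℕ, sinSinCoeff (2 * x) (2 * y) m / 4 = sinSinCoeff x y (2 * m) := fun m => by
    simp only [sinSinCoeff, Nat.cast_mul, Nat.cast_ofNat]
    ring_nf
  have hsum : (π / 4 * (|2 * x + 2 * y| - |2 * x - 2 * y|) - 2 * x * (2 * y) / 2) / 4
      = π / 8 * (|x + y| - |x - y|) - x * y / 2 := by
    rw [← mul_add, ← mul_sub, abs_mul, abs_mul, abs_two]
    ring
  simpa only [hterm, hsum] using (hasSum_sinSinCoeff h2).div_const 4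

theorem hasSum_sinSinCoeff_odd {x y : ℝ} (h : |x| + |y| ≤ π) :
    HasSum (fun m : ℕ => sinSinCoeff x y (2 * m + 1)) (π / 8 * (|x + y| - |x - y|)) := by
  have hall := hasSum_sinSinCoeff (x := x) (y := y) (by linarith [pi_pos])
  have heven := hasSum_sinSinCoeff_even h
  have hodd : Summable fun m : ℕ => sinSinCoeff x y (2 * m + 1) :=
    hall.summable.comp_injective fun a b hab => by simpa using hab
  convert hodd.hasSum using 1
  linarith [hall.unique (heven.even_add_odd hodd.hasSum)]

theorem abs_sinSinCoeff_le (x y : ℝ) (n : ℕ) : |sinSinCoeff x y n| ≤ |x| * |y| := by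
  rw [sinSinCoeff, abs_div, abs_mul, abs_pow, Nat.abs_cast]
  refine div_le_of_le_mul₀ (by positivity) (by positivity) ?_
  calc |sin (n * x)| * |sin (n * y)| ≤ |n * x| * |n * y| :=
        mul_le_mul abs_sin_le_abs abs_sin_le_abs (abs_nonneg _) (abs_nonneg _)
    _ = |x| * |y| * n ^ 2 := by
        rw [abs_mul, abs_mul, Nat.abs_cast]
        ring

theorem abs_tsum_sinSinCoeff_parity_sub_le {x y : ℝ} (h : |x| + |y| ≤ π) {p : ℕ} (hp : p < 2) :
    |∑' m : ℕ, sinSinCoeff x y (2 * m + p) - π / 8 * (|x + y| - |x - y|)| ≤ |x| * |y| / 2 := by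
  interval_cases p
  · simp only [add_zero]
    rw [(hasSum_sinSinCoeff_even h).tsum_eq, sub_sub_cancel_left, abs_neg, abs_div, abs_mul,
      abs_two]
  · rw [(hasSum_sinSinCoeff_odd h).tsum_eq, sub_self, abs_zero]
    positivity

theorem abs_tsum_sinSinCoeff_tail_sub_le {x y : ℝ} (h : |x| + |y| ≤ π) (n₀ : ℕ) :
    |∑' j : ℕ, sinSinCoeff x y (2 * j + n₀) - π / 8 * (|x + y| - |x - y|)|
      ≤ (n₀ + 1) / 2 * (|x| * |y|) := by
  set q := n₀ / 2
  set p := n₀ % 2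
  have hsumm : Summable fun m : ℕ => sinSinCoeff x y (2 * m + p) :=
    (hasSum_sinSinCoeff (by linarith [pi_pos])).summable.comp_injective fun a b hab => by
      simpa using hab
  have hsplit := hsumm.sum_add_tsum_nat_add q
  have hreindex : ∀ i, sinSinCoeff x y (2 * (i + q) + p) = sinSinCoeff x y (2 * i + n₀) :=
    fun i => by rw [show 2 * (i + q) + p = 2 * i + n₀ by omega]
  simp only [hreindex] at hsplit
  have hfinite : |∑ i ∈ range q, sinSinCoeff x y (2 * i + p)| ≤ q * (|x| * |y|) := by
    refine (abs_sum_le_sum_abs _ _).trans ?_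
    refine (sum_le_card_nsmul _ _ _ fun i _ => abs_sinSinCoeff_le x y (2 * i + p)).trans_eq ?_
    rw [card_range, nsmul_eq_mul]
  have hq : (q : ℝ) * 2 ≤ n₀ := by exact_mod_cast Nat.div_mul_le_self n₀ 2
  calc |∑' j : ℕ, sinSinCoeff x y (2 * j + n₀) - π / 8 * (|x + y| - |x - y|)|
      = |(∑' m : ℕ, sinSinCoeff x y (2 * m + p) - π / 8 * (|x + y| - |x - y|))
          - ∑ i ∈ range q, sinSinCoeff x y (2 * i + p)| := by
        rw [← hsplit]
        congr 1
        ring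
    _ ≤ |x| * |y| / 2 + q * (|x| * |y|) :=
        (abs_sub _ _).trans <|
          add_le_add (abs_tsum_sinSinCoeff_parity_sub_le h (Nat.mod_lt _ two_pos)) hfinite
    _ ≤ (n₀ + 1) / 2 * (|x| * |y|) := by
        nlinarith [mul_nonneg (abs_nonneg x) (abs_nonneg y)]

noncomputable def diagBlockTerm (k : ℕ) (ℓ u u' : ℝ) (j : ℕ) : ℝ :=
  if 1 ≤ j ∧ ¬(j = 1 ∧ k = 1) then
    sin (π * (2 * (j : ℝ) + (k : ℝ)) * u / (2 * ℓ))
      * sin (π * (2 * (j : ℝ) + (k : ℝ)) * u' / (2 * ℓ))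
      / (π ^ 2 * ((j : ℝ) + (k : ℝ) / 2) ^ 2)
  else 0

def diagBlockStart (k : ℕ) : ℕ := if k = 1 then 2 else 1

theorem one_le_diagBlockStart (k : ℕ) : 1 ≤ diagBlockStart k := by
  unfold diagBlockStart
  split_ifs <;> omega

theorem diagBlockTerm_of_lt_start {k j : ℕ} (ℓ u u' : ℝ) (hj : j < diagBlockStart k) :
    diagBlockTerm k ℓ u u' j = 0 := by
  unfold diagBlockStart at hj
  exact if_neg (by split_ifs at hj <;> omega)

theorem diagBlockTerm_add_start (k : ℕ) (ℓ u u' : ℝ) (i : ℕ) :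
    diagBlockTerm k ℓ u u' (i + diagBlockStart k)
      = 4 / π ^ 2 * sinSinCoeff (π / (2 * ℓ) * u) (π / (2 * ℓ) * u')
          (2 * i + (2 * diagBlockStart k + k)) := by
  have ht := one_le_diagBlockStart k
  have hj : 1 ≤ i + diagBlockStart k ∧ ¬(i + diagBlockStart k = 1 ∧ k = 1) := by
    unfold diagBlockStart at ht ⊢
    split_ifs <;> omega
  have hd : (0 : ℝ) < (i : ℝ) + diagBlockStart k + k / 2 := by
    have : (1 : ℝ) ≤ diagBlockStart k := by exact_mod_cast ht
    positivity
  rw [diagBlockTerm, if_pos hj, sinSinCoeff]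
  push_cast
  rw [show π * (2 * (i + diagBlockStart k) + k) * u / (2 * ℓ)
      = (2 * i + (2 * diagBlockStart k + k)) * (π / (2 * ℓ) * u) by ring,
    show π * (2 * (i + diagBlockStart k) + k) * u' / (2 * ℓ)
      = (2 * i + (2 * diagBlockStart k + k)) * (π / (2 * ℓ) * u') by ring,
    show (2 * (i : ℝ) + (2 * diagBlockStart k + k)) = 2 * (i + diagBlockStart k + k / 2) by ring]
  field_simp
  ring

theorem hasSum_diagBlockTerm {k : ℕ} {ℓ u u' s : ℝ}
    (hs : HasSum (fun i : ℕ => sinSinCoeff (π / (2 * ℓ) * u) (π / (2 * ℓ) * u')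
      (2 * i + (2 * diagBlockStart k + k))) s) :
    HasSum (diagBlockTerm k ℓ u u') (4 / π ^ 2 * s) := by
  rw [← hasSum_nat_add_iff' (diagBlockStart k),
    sum_eq_zero fun j hj => diagBlockTerm_of_lt_start ℓ u u' (mem_range.mp hj), sub_zero]
  simpa only [diagBlockTerm_add_start] using hs.mul_left (4 / π ^ 2)

theorem two_mul_diagBlockStart_add_le {k : ℕ} (hk : 1 ≤ k) :
    2 * diagBlockStart k + k + 1 ≤ 6 * k := by
  unfold diagBlockStart
  split_ifs <;> omega

theorem abs_mul_tsum_diagBlockTerm_sub_le (k : ℕ) {ℓ u u' : ℝ} (hℓ : 0 < ℓ) (hu : |u| ≤ ℓ)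
    (hu' : |u'| ≤ ℓ) :
    Summable (diagBlockTerm k ℓ u u') ∧
      |ℓ * ∑' j, diagBlockTerm k ℓ u u' j - 1 / 4 * (|u + u'| - |u - u'|)|
        ≤ (2 * diagBlockStart k + k + 1) / 2 * |u| * |u'| / ℓ := by
  set a := π / (2 * ℓ) with ha_def
  have ha : 0 < a := by positivity
  have habs : ∀ v, |a * v| = a * |v| := fun v => by rw [abs_mul, abs_of_pos ha]
  have hxy : |a * u| + |a * u'| ≤ π := by
    rw [habs, habs, ← mul_add, show π = a * (2 * ℓ) by rw [ha_def]; field_simp]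
    gcongr
    linarith
  set n₀ := 2 * diagBlockStart k + k
  have hsumm : Summable fun i : ℕ => sinSinCoeff (a * u) (a * u') (2 * i + n₀) :=
    (hasSum_sinSinCoeff (by linarith [pi_pos])).summable.comp_injective fun i j hij => by
      simpa using hij
  have hblock := hasSum_diagBlockTerm hsumm.hasSum
  refine ⟨hblock.summable, ?_⟩
  rw [hblock.tsum_eq]
  set T := ∑' i, sinSinCoeff (a * u) (a * u') (2 * i + n₀)
  calc |ℓ * (4 / π ^ 2 * T) - 1 / 4 * (|u + u'| - |u - u'|)|
      = |4 * ℓ / π ^ 2 * (T - π / 8 * (|a * u + a * u'| - |a * u - a * u'|))| := by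
        rw [← mul_add, ← mul_sub, habs, habs, ha_def]
        congr 1
        field_simp
        ring
    _ = 4 * ℓ / π ^ 2 * |T - π / 8 * (|a * u + a * u'| - |a * u - a * u'|)| := by
        rw [abs_mul, abs_of_pos (by positivity)]
    _ ≤ 4 * ℓ / π ^ 2 * ((n₀ + 1) / 2 * (|a * u| * |a * u'|)) := by
        gcongr
        exact abs_tsum_sinSinCoeff_tail_sub_le hxy n₀
    _ = (n₀ + 1) / 2 * |u| * |u'| / ℓ := by
        rw [habs, habs, ha_def]
        field_simp
        ring
    _ = (2 * diagBlockStart k + k + 1) / 2 * |u| * |u'| / ℓ := by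
        push_cast [n₀]
        ring

/-- Uniform approximation of the diagonal block `L_k^ℓ` of the free
two-particle resolvent kernel by the limiting kernel `(1/4)(|u+u'| − |u−u'|)`. -/
theorem stmt6 :
    ∃ C : ℝ, 0 < C ∧
      ∀ (k : ℕ), 1 ≤ k → ∀ (ℓ : ℝ), 0 < ℓ →
        ∀ u u' : ℝ, u ∈ Set.Icc (-ℓ) ℓ → u' ∈ Set.Icc (-ℓ) ℓ →
          Summable (fun j : ℕ =>
            |if 1 ≤ j ∧ ¬(j = 1 ∧ k = 1) then
                Real.sin (π * (2 * (j : ℝ) + (k : ℝ)) * u / (2 * ℓ))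
                  * Real.sin (π * (2 * (j : ℝ) + (k : ℝ)) * u' / (2 * ℓ))
                  / (π ^ 2 * ((j : ℝ) + (k : ℝ) / 2) ^ 2)
              else 0|) ∧
          |ℓ * (∑' j : ℕ,
              if 1 ≤ j ∧ ¬(j = 1 ∧ k = 1) then
                Real.sin (π * (2 * (j : ℝ) + (k : ℝ)) * u / (2 * ℓ))
                  * Real.sin (π * (2 * (j : ℝ) + (k : ℝ)) * u' / (2 * ℓ))
                  / (π ^ 2 * ((j : ℝ) + (k : ℝ) / 2) ^ 2)
              else 0)
            - (1 / 4) * (|u + u'| - |u - u'|)|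
            ≤ C * (k : ℝ) * |u| * |u'| / ℓ := by
  refine ⟨3, by norm_num, fun k hk ℓ hℓ u u' hu hu' => ?_⟩
  obtain ⟨hsumm, hle⟩ :=
    abs_mul_tsum_diagBlockTerm_sub_le k hℓ (abs_le.mpr hu) (abs_le.mpr hu')
  refine ⟨hsumm.abs, hle.trans ?_⟩
  have hstart : (2 * diagBlockStart k + k + 1 : ℝ) ≤ 6 * k := by
    exact_mod_cast two_mul_diagBlockStart_add_le hk
  gcongr
  linarith
end

section
/- Let U : ℝ → [0,∞] be measurable and define Z(x) := sup_{v ≥ x} v³·∫_v^∞ U(t) dt (with values in [0,∞]). Then for all a > 0, all ℓ₁, ℓ₂ > 0 and all positive integers i, j: ∫_0^{ℓ₁} ∫_0^{ℓ₂} U(x+y+a) · |φ_i^{ℓ₁}(x)|² · |φ_j^{ℓ₂}(y)|² dx dy ≤ 2·a^{−3}·Z(a) / max(ℓ₁, ℓ₂). -/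
/-!
Bound the square of the eigenfunction on the longer piece, of length `ℓ`, by its supremum `2/ℓ`.
For fixed `x ≥ 0` the remaining `y`-integral of `U (x + y + a)` is at most `∫_a^∞ U`, the other
eigenfunction integrates to `1`, and `a³ ∫_a^∞ U ≤ Z(a)`. By Tonelli the amplitude is symmetric
in the two pieces, so it is no loss to take the second piece to be the longer one.
-/

open MeasureTheory Real ENNReal

noncomputable section

def dirichletEigenfunction (ℓ : ℝ) (k : ℕ) (x : ℝ) : ℝ :=
  √(2 / ℓ) * sin (k * π * x / ℓ)

def interactionAmplitude (U : ℝ → ℝ≥0∞) (a ℓ₁ ℓ₂ : ℝ) (i j : ℕ) : ℝ≥0∞ :=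
  ∫⁻ x in Set.Icc 0 ℓ₁, ∫⁻ y in Set.Icc 0 ℓ₂,
    U (x + y + a) *
      ENNReal.ofReal (dirichletEigenfunction ℓ₁ i x ^ 2 * dirichletEigenfunction ℓ₂ j y ^ 2)

end

theorem integral_sin_sq_nat_mul_pi_div {ℓ : ℝ} (hℓ : ℓ ≠ 0) {k : ℕ} (hk : k ≠ 0) :
    ∫ x in (0 : ℝ)..ℓ, sin (k * π * x / ℓ) ^ 2 = ℓ / 2 := by
  have hc : (k * π / ℓ : ℝ) ≠ 0 := by positivity
  simp_rw [show ∀ x : ℝ, k * π * x / ℓ = k * π / ℓ * x by intro x; ring]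
  rw [intervalIntegral.integral_comp_mul_left (fun x => sin x ^ 2) hc, integral_sin_sq,
    show k * π / ℓ * ℓ = k * π by field_simp, sin_nat_mul_pi]
  have : (k * π : ℝ) ≠ 0 := by positivity
  simp only [sin_zero, zero_mul, sub_zero, mul_zero, zero_add, smul_eq_mul]
  field_simp

theorem continuous_dirichletEigenfunction (ℓ : ℝ) (k : ℕ) :
    Continuous (dirichletEigenfunction ℓ k) := by
  unfold dirichletEigenfunction
  fun_prop

theorem dirichletEigenfunction_sq {ℓ : ℝ} (hℓ : 0 ≤ ℓ) (k : ℕ) (x : ℝ) :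
    dirichletEigenfunction ℓ k x ^ 2 = 2 / ℓ * sin (k * π * x / ℓ) ^ 2 := by
  rw [dirichletEigenfunction, mul_pow, sq_sqrt (by positivity)]

theorem dirichletEigenfunction_sq_le {ℓ : ℝ} (hℓ : 0 ≤ ℓ) (k : ℕ) (x : ℝ) :
    dirichletEigenfunction ℓ k x ^ 2 ≤ 2 / ℓ := by
  rw [dirichletEigenfunction_sq hℓ]
  exact mul_le_of_le_one_right (by positivity) (sin_sq_le_one _)

theorem lintegral_dirichletEigenfunction_sq {ℓ : ℝ} (hℓ : 0 < ℓ) {k : ℕ} (hk : k ≠ 0) :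
    ∫⁻ x in Set.Icc 0 ℓ, ENNReal.ofReal (dirichletEigenfunction ℓ k x ^ 2) = 1 := by
  rw [← ofReal_integral_eq_lintegral_ofReal (f := fun x => dirichletEigenfunction ℓ k x ^ 2)
      (by exact ((continuous_dirichletEigenfunction ℓ k).pow 2).integrableOn_Icc)
      (.of_forall fun _ => sq_nonneg _),
    integral_Icc_eq_integral_Ioc, ← intervalIntegral.integral_of_le hℓ.le]
  simp_rw [dirichletEigenfunction_sq hℓ.le]
  rw [intervalIntegral.integral_const_mul, integral_sin_sq_nat_mul_pi_div hℓ.ne' hk,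
    div_mul_div_cancel₀ hℓ.ne', div_self two_ne_zero, ENNReal.ofReal_one]

theorem setLIntegral_comp_add_le_lintegral_Ioi (U : ℝ → ℝ≥0∞) {s : Set ℝ} (hs : s ⊆ Set.Ici 0)
    {a c : ℝ} (hac : a ≤ c) :
    ∫⁻ y in s, U (y + c) ≤ ∫⁻ t in Set.Ioi a, U t :=
  calc ∫⁻ y in s, U (y + c) ≤ ∫⁻ y in Set.Ici 0, U (y + c) := lintegral_mono_set hs
    _ = ∫⁻ t in Set.Ici c, U t := by
      rw [(measurePreserving_add_right volume c).setLIntegral_comp_emb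
        (measurableEmbedding_addRight c), Set.image_add_const_Ici, zero_add]
    _ ≤ ∫⁻ t in Set.Ici a, U t := lintegral_mono_set (Set.Ici_subset_Ici.mpr hac)
    _ = ∫⁻ t in Set.Ioi a, U t := setLIntegral_congr Ioi_ae_eq_Ici.symm

theorem interactionAmplitude_comm {U : ℝ → ℝ≥0∞} (hU : Measurable U) (a ℓ₁ ℓ₂ : ℝ) (i j : ℕ) :
    interactionAmplitude U a ℓ₁ ℓ₂ i j = interactionAmplitude U a ℓ₂ ℓ₁ j i := by
  have := continuous_dirichletEigenfunction ℓ₁ i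
  have := continuous_dirichletEigenfunction ℓ₂ j
  rw [interactionAmplitude, lintegral_lintegral_swap (by fun_prop)]
  simp only [interactionAmplitude, add_comm, mul_comm]

theorem interactionAmplitude_le (U : ℝ → ℝ≥0∞) (a : ℝ) {ℓ₁ ℓ₂ : ℝ} {i : ℕ} (hℓ₁ : 0 < ℓ₁)
    (hi : i ≠ 0) (hℓ₂ : 0 ≤ ℓ₂) (j : ℕ) :
    interactionAmplitude U a ℓ₁ ℓ₂ i j ≤ ENNReal.ofReal (2 / ℓ₂) * ∫⁻ t in Set.Ioi a, U t := by
  set I := ∫⁻ t in Set.Ioi a, U t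
  calc interactionAmplitude U a ℓ₁ ℓ₂ i j
      ≤ ∫⁻ x in Set.Icc 0 ℓ₁,
          ENNReal.ofReal (dirichletEigenfunction ℓ₁ i x ^ 2) * (ENNReal.ofReal (2 / ℓ₂) * I) :=
        setLIntegral_mono' measurableSet_Icc fun x hx => ?_
    _ = ENNReal.ofReal (2 / ℓ₂) * I := by
      have := continuous_dirichletEigenfunction ℓ₁ i
      rw [lintegral_mul_const _ (by fun_prop),
        lintegral_dirichletEigenfunction_sq hℓ₁ hi, one_mul]
  set c := ENNReal.ofReal (dirichletEigenfunction ℓ₁ i x ^ 2) * ENNReal.ofReal (2 / ℓ₂)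
  calc ∫⁻ y in Set.Icc 0 ℓ₂, U (x + y + a) *
        ENNReal.ofReal (dirichletEigenfunction ℓ₁ i x ^ 2 * dirichletEigenfunction ℓ₂ j y ^ 2)
      ≤ ∫⁻ y in Set.Icc 0 ℓ₂, U (y + (x + a)) * c := lintegral_mono fun y => by
        rw [ENNReal.ofReal_mul (sq_nonneg _), add_comm x y, add_assoc]
        exact mul_le_mul_right (mul_le_mul_right
          (ofReal_le_ofReal (dirichletEigenfunction_sq_le hℓ₂ j y)) _) _
    _ = (∫⁻ y in Set.Icc 0 ℓ₂, U (y + (x + a))) * c :=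
        lintegral_mul_const' _ _ (mul_ne_top ofReal_ne_top ofReal_ne_top)
    _ ≤ I * c := by
        gcongr
        exact setLIntegral_comp_add_le_lintegral_Ioi U Set.Icc_subset_Ici_self
          (by linarith [hx.1])
    _ = ENNReal.ofReal (dirichletEigenfunction ℓ₁ i x ^ 2) * (ENNReal.ofReal (2 / ℓ₂) * I) := by
        ring

/-- Long-distance bound on the interaction amplitude of two one-particle
Dirichlet eigenstates living in pieces of lengths `ℓ₁`, `ℓ₂` at distance `a`:
`∫∫ U(x+y+a)·|φ_i^{ℓ₁}(x)|²·|φ_j^{ℓ₂}(y)|² ≤ 2·a⁻³·Z(a)/max(ℓ₁,ℓ₂)`. -/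
theorem stmt10
    (U : ℝ → ℝ≥0∞) (hUmeas : Measurable U)
    (Z : ℝ → ℝ≥0∞)
    (hZ : ∀ x : ℝ, Z x = ⨆ v ∈ Set.Ici x, ENNReal.ofReal (v ^ 3) * ∫⁻ t in Set.Ioi v, U t)
    (a ℓ₁ ℓ₂ : ℝ) (ha : 0 < a) (h₁ : 0 < ℓ₁) (h₂ : 0 < ℓ₂)
    (i j : ℕ) (hi : 1 ≤ i) (hj : 1 ≤ j) :
    (∫⁻ x in Set.Icc (0:ℝ) ℓ₁, ∫⁻ y in Set.Icc (0:ℝ) ℓ₂,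
        U (x + y + a) *
          ENNReal.ofReal ((Real.sqrt (2 / ℓ₁) * Real.sin ((i:ℝ) * π * x / ℓ₁)) ^ 2 *
            (Real.sqrt (2 / ℓ₂) * Real.sin ((j:ℝ) * π * y / ℓ₂)) ^ 2))
      ≤ ENNReal.ofReal (2 / (a ^ 3 * max ℓ₁ ℓ₂)) * Z a := by
  change interactionAmplitude U a ℓ₁ ℓ₂ i j ≤ _
  set I := ∫⁻ t in Set.Ioi a, U t
  have hZa : ENNReal.ofReal (a ^ 3) * I ≤ Z a :=
    hZ a ▸ le_iSup₂ (f := fun v (_ : v ∈ Set.Ici a) =>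
      ENNReal.ofReal (v ^ 3) * ∫⁻ t in Set.Ioi v, U t) a Set.self_mem_Ici
  have hmax : interactionAmplitude U a ℓ₁ ℓ₂ i j ≤ ENNReal.ofReal (2 / max ℓ₁ ℓ₂) * I := by
    rcases le_total ℓ₁ ℓ₂ with h | h
    · rw [max_eq_right h]
      exact interactionAmplitude_le U a h₁ (by omega) h₂.le j
    · rw [max_eq_left h, interactionAmplitude_comm hUmeas]
      exact interactionAmplitude_le U a h₂ (by omega) h₁.le i
  calc interactionAmplitude U a ℓ₁ ℓ₂ i j
      ≤ ENNReal.ofReal (2 / max ℓ₁ ℓ₂) * I := hmax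
    _ = ENNReal.ofReal (2 / (a ^ 3 * max ℓ₁ ℓ₂)) * (ENNReal.ofReal (a ^ 3) * I) := by
      rw [← mul_assoc, ← ENNReal.ofReal_mul (by positivity)]
      congr 2
      field_simp
    _ ≤ _ := by gcongr
end

section
/- For every ε ∈ (0,2) there exists a constant C = C(ε) > 0 such that for every measurable U : ℝ → [0,∞], every a > 0, all lengths 0 < ℓ₂ ≤ ℓ₁ and all i, j ∈ {1,2}: ∫_0^{ℓ₁} ∫_0^{ℓ₂} U(x+y+a) · |φ_i^{ℓ₁}(x)|² · |φ_j^{ℓ₂}(y)|² dx dy ≤ C · a^{−ε} · Z(a) · ℓ₁^{−2} · ℓ₂^{−(2−ε)}, where Z(x) := sup_{v ≥ x} v³·∫_v^∞ U(t) dt. -/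
open MeasureTheory Real ENNReal
open Set

/-!
Since `sin² s ≤ s²`, the eigenfunctions satisfy `φ_i^ℓ(x)² ≲ x²/ℓ³`, and for `t = x + y + a` with
`x ≤ ℓ₁`, `y ≤ ℓ₂` one has `x² y² ≤ ℓ₁ ℓ₂^ε t^(3-ε)`. After integrating out `y` (which costs a
factor `ℓ₂`), everything reduces to the tail moment `∫_a^∞ U(t) t^(3-ε) dt`. On the dyadic shell
`[2^k a, 2^(k+1) a)` this moment is at most
`(2^(k+1) a)^(3-ε) (2^k a)^(-3) Z(a) = 2^(3-ε) (2^k a)^(-ε) Z(a)`,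
and these bounds sum to a geometric series because `ε > 0`.
-/

noncomputable def dirichletMode (ℓ : ℝ) (i : ℕ) (x : ℝ) : ℝ :=
  √(2 / ℓ) * Real.sin (i * π * x / ℓ)

lemma dirichletMode_sq_le {ℓ m : ℝ} (hℓ : 0 < ℓ) {i : ℕ} (hi : (i : ℝ) ≤ m) (x : ℝ) :
    dirichletMode ℓ i x ^ 2 ≤ 2 * (m * π) ^ 2 * x ^ 2 / ℓ ^ 3 := by
  rw [dirichletMode, mul_pow, sq_sqrt (by positivity)]
  calc 2 / ℓ * Real.sin (i * π * x / ℓ) ^ 2 ≤ 2 / ℓ * (i * π * x / ℓ) ^ 2 :=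
        mul_le_mul_of_nonneg_left sin_sq_le_sq (by positivity)
    _ = 2 * (i * π) ^ 2 * x ^ 2 / ℓ ^ 3 := by field_simp
    _ ≤ 2 * (m * π) ^ 2 * x ^ 2 / ℓ ^ 3 := by gcongr

lemma sq_mul_sq_le_mul_rpow {x y ℓ ℓ' t ε : ℝ} (hx : 0 ≤ x) (hxℓ : x ≤ ℓ) (hxt : x ≤ t)
    (hy : 0 ≤ y) (hyℓ : y ≤ ℓ') (hyt : y ≤ t) (hε : 0 ≤ ε) (hε' : ε ≤ 2) :
    x ^ 2 * y ^ 2 ≤ ℓ * ℓ' ^ ε * t ^ (3 - ε) := by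
  have ht : 0 ≤ t := hx.trans hxt
  have hx2 : x ^ 2 ≤ ℓ * t := by rw [sq]; exact mul_le_mul hxℓ hxt hx (hx.trans hxℓ)
  have hy2 : y ^ 2 ≤ ℓ' ^ ε * t ^ (2 - ε) := by
    rw [← Real.rpow_natCast, show ((2 : ℕ) : ℝ) = ε + (2 - ε) by norm_num,
      rpow_add' hy (by norm_num)]
    exact mul_le_mul (rpow_le_rpow hy hyℓ hε) (rpow_le_rpow hy hyt (by linarith))
      (rpow_nonneg hy _) (rpow_nonneg (hy.trans hyℓ) _)
  calc x ^ 2 * y ^ 2 ≤ (ℓ * t) * (ℓ' ^ ε * t ^ (2 - ε)) :=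
        mul_le_mul hx2 hy2 (by positivity) (mul_nonneg (hx.trans hxℓ) ht)
    _ = ℓ * ℓ' ^ ε * (t ^ (1 : ℝ) * t ^ (2 - ε)) := by rw [Real.rpow_one]; ring
    _ = ℓ * ℓ' ^ ε * t ^ (3 - ε) := by
        rw [← rpow_add' ht (by linarith)]; ring_nf

lemma dirichletMode_sq_mul_sq_le {ℓ₁ ℓ₂ m x y a ε : ℝ} {i j : ℕ} (hℓ₁ : 0 < ℓ₁) (hℓ₂ : 0 < ℓ₂)
    (hi : (i : ℝ) ≤ m) (hj : (j : ℝ) ≤ m) (hx : x ∈ Icc 0 ℓ₁) (hy : y ∈ Icc 0 ℓ₂) (ha : 0 ≤ a)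
    (hε : 0 ≤ ε) (hε' : ε ≤ 2) :
    dirichletMode ℓ₁ i x ^ 2 * dirichletMode ℓ₂ j y ^ 2
      ≤ 4 * (m * π) ^ 4 * ℓ₂ ^ ε / (ℓ₁ ^ 2 * ℓ₂ ^ 3) * (x + y + a) ^ (3 - ε) :=
  calc dirichletMode ℓ₁ i x ^ 2 * dirichletMode ℓ₂ j y ^ 2
      ≤ (2 * (m * π) ^ 2 * x ^ 2 / ℓ₁ ^ 3) * (2 * (m * π) ^ 2 * y ^ 2 / ℓ₂ ^ 3) :=
        mul_le_mul (dirichletMode_sq_le hℓ₁ hi x) (dirichletMode_sq_le hℓ₂ hj y)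
          (sq_nonneg _) (by positivity)
    _ = 4 * (m * π) ^ 4 / (ℓ₁ ^ 3 * ℓ₂ ^ 3) * (x ^ 2 * y ^ 2) := by ring
    _ ≤ 4 * (m * π) ^ 4 / (ℓ₁ ^ 3 * ℓ₂ ^ 3) * (ℓ₁ * ℓ₂ ^ ε * (x + y + a) ^ (3 - ε)) :=
        mul_le_mul_of_nonneg_left (sq_mul_sq_le_mul_rpow hx.1 hx.2 (by linarith [hy.1]) hy.1
          hy.2 (by linarith [hx.1]) hε hε') (by positivity)
    _ = 4 * (m * π) ^ 4 * ℓ₂ ^ ε / (ℓ₁ ^ 2 * ℓ₂ ^ 3) * (x + y + a) ^ (3 - ε) := by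
        field_simp

lemma setLIntegral_Icc_comp_add_le (f : ℝ → ℝ≥0∞) (ℓ b : ℝ) :
    ∫⁻ x in Icc 0 ℓ, f (x + b) ≤ ∫⁻ t in Ici b, f t := by
  rw [(measurePreserving_add_right volume b).setLIntegral_comp_emb
    (measurableEmbedding_addRight b), image_add_const_Icc, zero_add]
  exact lintegral_mono_set Icc_subset_Ici_self

lemma lintegral_Icc_Icc_comp_add_add_le {f : ℝ → ℝ≥0∞} (hf : Measurable f) (ℓ₁ ℓ₂ a : ℝ) :
    ∫⁻ x in Icc 0 ℓ₁, ∫⁻ y in Icc 0 ℓ₂, f (x + y + a)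
      ≤ ENNReal.ofReal ℓ₂ * ∫⁻ t in Ici a, f t := by
  rw [lintegral_lintegral_swap (by fun_prop)]
  calc ∫⁻ y in Icc 0 ℓ₂, ∫⁻ x in Icc 0 ℓ₁, f (x + y + a)
      ≤ ∫⁻ y in Icc 0 ℓ₂, ∫⁻ t in Ici a, f t := by
        refine setLIntegral_mono' measurableSet_Icc fun y hy => ?_
        simp_rw [add_assoc]
        exact (setLIntegral_Icc_comp_add_le f ℓ₁ (y + a)).trans
          (lintegral_mono_set (Ici_subset_Ici.2 (by linarith [hy.1])))
    _ = ENNReal.ofReal ℓ₂ * ∫⁻ t in Ici a, f t := by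
        rw [setLIntegral_const, volume_Icc, sub_zero, mul_comm]

lemma lintegral_dirichletMode_le {U : ℝ → ℝ≥0∞} (hU : Measurable U) {ℓ₁ ℓ₂ m a ε : ℝ}
    {i j : ℕ} (hℓ₁ : 0 < ℓ₁) (hℓ₂ : 0 < ℓ₂) (hi : (i : ℝ) ≤ m) (hj : (j : ℝ) ≤ m) (ha : 0 ≤ a)
    (hε : 0 ≤ ε) (hε' : ε ≤ 2) :
    ∫⁻ x in Icc 0 ℓ₁, ∫⁻ y in Icc 0 ℓ₂,
        U (x + y + a) * ENNReal.ofReal (dirichletMode ℓ₁ i x ^ 2 * dirichletMode ℓ₂ j y ^ 2)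
      ≤ ENNReal.ofReal (4 * (m * π) ^ 4 / (ℓ₁ ^ 2 * ℓ₂ ^ (2 - ε)))
          * ∫⁻ t in Ici a, U t * ENNReal.ofReal (t ^ (3 - ε)) := by
  set K := 4 * (m * π) ^ 4 * ℓ₂ ^ ε / (ℓ₁ ^ 2 * ℓ₂ ^ 3) with hK_def
  have hK : K * ℓ₂ = 4 * (m * π) ^ 4 / (ℓ₁ ^ 2 * ℓ₂ ^ (2 - ε)) := by
    rw [hK_def, rpow_sub hℓ₂, Real.rpow_two]; field_simp
  calc _ ≤ ∫⁻ x in Icc 0 ℓ₁, ∫⁻ y in Icc 0 ℓ₂,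
          ENNReal.ofReal K * (U (x + y + a) * ENNReal.ofReal ((x + y + a) ^ (3 - ε))) := by
        refine setLIntegral_mono' measurableSet_Icc fun x hx =>
          setLIntegral_mono' measurableSet_Icc fun y hy => ?_
        rw [mul_left_comm, ← ofReal_mul (by positivity)]
        gcongr U (x + y + a) * ENNReal.ofReal ?_
        exact dirichletMode_sq_mul_sq_le hℓ₁ hℓ₂ hi hj hx hy ha hε hε'
    _ = ENNReal.ofReal K * ∫⁻ x in Icc 0 ℓ₁, ∫⁻ y in Icc 0 ℓ₂,
          U (x + y + a) * ENNReal.ofReal ((x + y + a) ^ (3 - ε)) := by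
        simp_rw [lintegral_const_mul' _ _ ofReal_ne_top]
    _ ≤ ENNReal.ofReal K
          * (ENNReal.ofReal ℓ₂ * ∫⁻ t in Ici a, U t * ENNReal.ofReal (t ^ (3 - ε))) := by
        gcongr
        exact lintegral_Icc_Icc_comp_add_add_le
          (f := fun t => U t * ENNReal.ofReal (t ^ (3 - ε))) (by fun_prop) ℓ₁ ℓ₂ a
    _ = _ := by rw [← mul_assoc, ← ofReal_mul (by positivity), hK]

lemma setLIntegral_Ico_mul_rpow_le {U : ℝ → ℝ≥0∞} {n : ℕ} {ε v : ℝ} {M : ℝ≥0∞} (hv : 0 < v)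
    (hεn : ε ≤ n) (hM : ENNReal.ofReal (v ^ n) * ∫⁻ t in Ioi v, U t ≤ M) :
    ∫⁻ t in Ico v (2 * v), U t * ENNReal.ofReal (t ^ (n - ε))
      ≤ ENNReal.ofReal (2 ^ (n - ε) * v ^ (-ε)) * M := by
  have hsplit : (2 * v) ^ ((n : ℝ) - ε) = 2 ^ ((n : ℝ) - ε) * v ^ (-ε) * v ^ n := by
    rw [mul_rpow zero_le_two hv.le, sub_eq_neg_add, rpow_add hv, Real.rpow_natCast]; ring
  calc ∫⁻ t in Ico v (2 * v), U t * ENNReal.ofReal (t ^ (n - ε))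
      ≤ ∫⁻ t in Ici v, U t * ENNReal.ofReal ((2 * v) ^ (n - ε)) := by
        refine (setLIntegral_mono' measurableSet_Ico fun t ht => ?_).trans
          (lintegral_mono_set Ico_subset_Ici_self)
        gcongr U t * ENNReal.ofReal ?_
        exact Real.rpow_le_rpow (hv.le.trans ht.1) ht.2.le (sub_nonneg.2 hεn)
    _ = ENNReal.ofReal (2 ^ (n - ε) * v ^ (-ε))
          * (ENNReal.ofReal (v ^ n) * ∫⁻ t in Ioi v, U t) := by
        rw [lintegral_mul_const' _ _ ofReal_ne_top, setLIntegral_congr Ioi_ae_eq_Ici.symm, hsplit,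
          ofReal_mul (by positivity)]
        ring
    _ ≤ ENNReal.ofReal (2 ^ (n - ε) * v ^ (-ε)) * M := by gcongr

lemma Ici_subset_iUnion_Ico_two_pow_mul {a : ℝ} (ha : 0 < a) :
    Ici a ⊆ ⋃ k : ℕ, Ico (2 ^ k * a) (2 * (2 ^ k * a)) := by
  intro t (ht : a ≤ t)
  obtain ⟨k, hk, hk'⟩ := exists_nat_pow_near ((one_le_div ha).2 ht) one_lt_two
  rw [le_div_iff₀ ha] at hk
  rw [pow_succ, div_lt_iff₀ ha] at hk'
  exact mem_iUnion.2 ⟨k, hk, by linarith⟩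

lemma setLIntegral_Ici_mul_rpow_le {U : ℝ → ℝ≥0∞} {n : ℕ} {ε a : ℝ} {M : ℝ≥0∞} (hε : 0 < ε)
    (hεn : ε ≤ n) (ha : 0 < a) (hM : ∀ v, a ≤ v → ENNReal.ofReal (v ^ n) * ∫⁻ t in Ioi v, U t ≤ M) :
    ∫⁻ t in Ici a, U t * ENNReal.ofReal (t ^ (n - ε))
      ≤ ENNReal.ofReal (2 ^ (n - ε) / (1 - 2 ^ (-ε)) * a ^ (-ε)) * M := by
  have hq : (2 : ℝ) ^ (-ε) < 1 := rpow_lt_one_of_one_lt_of_neg one_lt_two (neg_neg_of_pos hε)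
  have hq0 : (0 : ℝ) ≤ 2 ^ (-ε) := by positivity
  have hshell : ∀ k : ℕ, (2 ^ (n - ε) * (2 ^ k * a) ^ (-ε) : ℝ)
      = 2 ^ (n - ε) * a ^ (-ε) * (2 ^ (-ε)) ^ k := fun k => by
    rw [mul_rpow (by positivity) ha.le, rpow_pow_comm zero_le_two]; ring
  calc ∫⁻ t in Ici a, U t * ENNReal.ofReal (t ^ (n - ε))
      ≤ ∑' k : ℕ, ∫⁻ t in Ico (2 ^ k * a) (2 * (2 ^ k * a)), U t * ENNReal.ofReal (t ^ (n - ε)) :=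
        (lintegral_mono_set (Ici_subset_iUnion_Ico_two_pow_mul ha)).trans (lintegral_iUnion_le _ _)
    _ ≤ ∑' k : ℕ, ENNReal.ofReal (2 ^ (n - ε) * a ^ (-ε)) * M * ENNReal.ofReal (2 ^ (-ε)) ^ k := by
        refine ENNReal.tsum_le_tsum fun k => (setLIntegral_Ico_mul_rpow_le (by positivity) hεn
          (hM _ (le_mul_of_one_le_left ha.le (one_le_pow₀ one_le_two)))).trans_eq ?_
        rw [hshell, ofReal_mul (by positivity), ofReal_pow hq0]
        ring
    _ = ENNReal.ofReal (2 ^ (n - ε) / (1 - 2 ^ (-ε)) * a ^ (-ε)) * M := by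
        rw [ENNReal.tsum_mul_left, ENNReal.tsum_geometric, ← ofReal_one, ← ofReal_sub _ hq0,
          ← ofReal_inv_of_pos (by linarith), mul_right_comm, ← ofReal_mul (by positivity)]
        congr 2
        ring

/-- Short-distance bound on the interaction amplitude of two low-lying
one-particle Dirichlet eigenstates (`i, j ∈ {1,2}`) in pieces of lengths `ℓ₂ ≤ ℓ₁` at
distance `a`: it is `≤ C·a^{−ε}·Z(a)·ℓ₁^{−2}·ℓ₂^{−(2−ε)}`. -/
theorem stmt11 (ε : ℝ) (hε₀ : 0 < ε) (hε₂ : ε < 2) :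
    ∃ C : ℝ, 0 < C ∧
      ∀ U : ℝ → ℝ≥0∞, Measurable U →
      ∀ Z : ℝ → ℝ≥0∞,
        (∀ x : ℝ, Z x = ⨆ v ∈ Set.Ici x, ENNReal.ofReal (v ^ 3) * ∫⁻ t in Set.Ioi v, U t) →
      ∀ a : ℝ, 0 < a → ∀ ℓ₁ ℓ₂ : ℝ, 0 < ℓ₂ → ℓ₂ ≤ ℓ₁ →
      ∀ i j : ℕ, (i = 1 ∨ i = 2) → (j = 1 ∨ j = 2) →
        (∫⁻ x in Set.Icc (0:ℝ) ℓ₁, ∫⁻ y in Set.Icc (0:ℝ) ℓ₂,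
            U (x + y + a) *
              ENNReal.ofReal ((Real.sqrt (2 / ℓ₁) * Real.sin ((i:ℝ) * π * x / ℓ₁)) ^ 2 *
                (Real.sqrt (2 / ℓ₂) * Real.sin ((j:ℝ) * π * y / ℓ₂)) ^ 2))
          ≤ ENNReal.ofReal (C * a ^ (-ε) / (ℓ₁ ^ 2 * ℓ₂ ^ (2 - ε))) * Z a := by
  have hq : (2 : ℝ) ^ (-ε) < 1 := rpow_lt_one_of_one_lt_of_neg one_lt_two (by linarith)
  set D : ℝ := 2 ^ (3 - ε) / (1 - 2 ^ (-ε))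
  have hD : 0 < D := div_pos (by positivity) (by linarith)
  refine ⟨4 * (2 * π) ^ 4 * D, by positivity, fun U hU Z hZ a ha ℓ₁ ℓ₂ hℓ₂ hℓ i j hi hj => ?_⟩
  have hmode : ∀ k : ℕ, (k = 1 ∨ k = 2) → (k : ℝ) ≤ 2 := by rintro k (rfl | rfl) <;> norm_num
  have hZa : ∀ v, a ≤ v → ENNReal.ofReal (v ^ 3) * ∫⁻ t in Ioi v, U t ≤ Z a := fun v hv =>
    hZ a ▸ le_biSup (fun v => ENNReal.ofReal (v ^ 3) * ∫⁻ t in Ioi v, U t) (mem_Ici.2 hv)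
  calc _ ≤ ENNReal.ofReal (4 * (2 * π) ^ 4 / (ℓ₁ ^ 2 * ℓ₂ ^ (2 - ε)))
          * ∫⁻ t in Ici a, U t * ENNReal.ofReal (t ^ (3 - ε)) :=
        lintegral_dirichletMode_le hU (hℓ₂.trans_le hℓ) hℓ₂ (hmode i hi) (hmode j hj) ha.le
          hε₀.le hε₂.le
    _ ≤ ENNReal.ofReal (4 * (2 * π) ^ 4 / (ℓ₁ ^ 2 * ℓ₂ ^ (2 - ε)))
          * (ENNReal.ofReal (D * a ^ (-ε)) * Z a) := by
        gcongr
        exact_mod_cast setLIntegral_Ici_mul_rpow_le (n := 3) hε₀ (by norm_num; linarith) ha hZa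
    _ = ENNReal.ofReal (4 * (2 * π) ^ 4 * D * a ^ (-ε) / (ℓ₁ ^ 2 * ℓ₂ ^ (2 - ε))) * Z a := by
        rw [← mul_assoc, ← ofReal_mul (by positivity)]
        congr 2
        ring
end

section
/- Let U : ℝ → [0,∞) be measurable, integrable and compactly supported. Then there exists a constant C = C(U) > 0 such that for all ℓ₁, ℓ₂ > 0, every a ≥ 0 and all positive integers i, j: (1/(ℓ₁·ℓ₂)) · ∫_0^{ℓ₁} ∫_0^{ℓ₂} U(x+y+a) · sin²(iπx/ℓ₁) · sin²(jπy/ℓ₂) dx dy ≤ C · min(i,ℓ₁)² · min(j,ℓ₂)² / (ℓ₁³·ℓ₂³). -/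
/-!
Choose `R ≥ 0` with `U = 0` on `(R, ∞)`. As `x, y, a ≥ 0`, the integrand vanishes unless
`x, y ∈ [0, R]`, and there `sin² (kπt/ℓ) ≤ max 1 (πR)² · min(k, ℓ)² / ℓ²`: use `sin² s ≤ s²`
if `k ≤ ℓ` and `sin² ≤ 1` otherwise. With both sine factors bounded by these constants, the
`y`-integral is at most `∫ U` by translation invariance, and the `x`-range contributes a length
at most `R`.
-/

open MeasureTheory Real Set

theorem sin_sq_le_max_mul_min_sq_div {k ℓ t R : ℝ} (hℓ : 0 < ℓ) (ht : |t| ≤ R) :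
    sin (k * π * t / ℓ) ^ 2 ≤ max 1 ((π * R) ^ 2) * min k ℓ ^ 2 / ℓ ^ 2 := by
  rcases le_total k ℓ with hkℓ | hℓk
  · have htR : (π * t) ^ 2 ≤ (π * R) ^ 2 := by
      rw [mul_pow, mul_pow]
      exact mul_le_mul_of_nonneg_left (sq_le_sq' (abs_le.mp ht).1 (abs_le.mp ht).2) (sq_nonneg π)
    calc sin (k * π * t / ℓ) ^ 2 ≤ (k * π * t / ℓ) ^ 2 := sin_sq_le_sq
      _ = (π * t) ^ 2 * k ^ 2 / ℓ ^ 2 := by ring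
      _ ≤ max 1 ((π * R) ^ 2) * min k ℓ ^ 2 / ℓ ^ 2 := by
        rw [min_eq_left hkℓ]
        gcongr
        exact htR.trans (le_max_right _ _)
  · rw [min_eq_right hℓk, mul_div_cancel_right₀ _ (by positivity)]
    exact (sin_sq_le_one _).trans (le_max_left _ _)

theorem setIntegral_le_mul_of_le_of_eq_zero {F : ℝ → ℝ} {s : Set ℝ} {C R : ℝ}
    (hs : MeasurableSet s) (hs0 : s ⊆ Ici 0) (hC : 0 ≤ C) (hR : 0 ≤ R)
    (hF0 : ∀ x ∈ s, 0 ≤ F x) (hFC : ∀ x ∈ s, x ≤ R → F x ≤ C)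
    (hFR : ∀ x ∈ s, R < x → F x = 0) :
    ∫ x in s, F x ≤ C * R := by
  have hind : Integrable ((Icc 0 R).indicator fun _ => C) :=
    (integrableOn_const measure_Icc_lt_top.ne).integrable_indicator measurableSet_Icc
  have hpoint : ∀ x ∈ s, F x ≤ (Icc 0 R).indicator (fun _ => C) x := by
    intro x hx
    by_cases hxR : x ≤ R
    · rw [indicator_of_mem (show x ∈ Icc 0 R from ⟨hs0 hx, hxR⟩)]
      exact hFC x hx hxR
    · rw [hFR x hx (not_le.mp hxR), indicator_of_notMem fun h => hxR h.2]
  calc ∫ x in s, F x ≤ ∫ x in s, (Icc 0 R).indicator (fun _ => C) x :=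
        integral_mono_of_nonneg ((ae_restrict_mem hs).mono hF0) hind.integrableOn
          ((ae_restrict_mem hs).mono hpoint)
    _ ≤ ∫ x, (Icc 0 R).indicator (fun _ => C) x :=
        setIntegral_le_integral hind (.of_forall fun x => indicator_nonneg (fun _ _ => hC) x)
    _ = C * R := by
        rw [integral_indicator_const _ measurableSet_Icc, Real.volume_real_Icc_of_le hR,
          sub_zero, smul_eq_mul, mul_comm]

section TranslatedPotential

variable {U : ℝ → ℝ} {R a : ℝ}

theorem setIntegral_comp_add_mul_le (hU0 : ∀ z, 0 ≤ U z) (hUint : Integrable U)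
    (hUR : ∀ z, R < z → U z = 0) (ha : 0 ≤ a) {t : Set ℝ} (ht : MeasurableSet t)
    (ht0 : t ⊆ Ici 0) {g : ℝ → ℝ} {B : ℝ} (hB : 0 ≤ B) (hg0 : ∀ y, 0 ≤ g y)
    (hgB : ∀ y ∈ Icc 0 R, g y ≤ B) {x : ℝ} (hx : 0 ≤ x) :
    ∫ y in t, U (x + y + a) * g y ≤ B * ∫ z, U z := by
  have htrans : Integrable (fun y => U (x + y + a)) := by
    simpa only [add_comm, add_left_comm] using hUint.comp_add_right (x + a)
  have hpoint : ∀ y ∈ t, U (x + y + a) * g y ≤ B * U (x + y + a) := by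
    intro y hy
    by_cases hUy : U (x + y + a) = 0
    · simp [hUy]
    have hy0 : 0 ≤ y := ht0 hy
    have hyR : y ≤ R := by
      by_contra! h
      exact hUy (hUR _ (by linarith))
    rw [mul_comm]
    exact mul_le_mul_of_nonneg_right (hgB y ⟨hy0, hyR⟩) (hU0 _)
  calc ∫ y in t, U (x + y + a) * g y ≤ ∫ y in t, B * U (x + y + a) :=
        integral_mono_of_nonneg (.of_forall fun y => mul_nonneg (hU0 _) (hg0 y))
          (htrans.const_mul B).integrableOn
          ((ae_restrict_mem ht).mono hpoint)
    _ ≤ ∫ y, B * U (x + y + a) :=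
        setIntegral_le_integral (htrans.const_mul B)
          (.of_forall fun y => mul_nonneg hB (hU0 _))
    _ = B * ∫ z, U z := by
        rw [integral_const_mul]
        simpa only [add_comm, add_left_comm] using
          congrArg (B * ·) (integral_add_right_eq_self U (x + a))

theorem setIntegral_comp_add_mul_eq_zero (hUR : ∀ z, R < z → U z = 0) (ha : 0 ≤ a)
    {t : Set ℝ} (ht0 : t ⊆ Ici 0) (g : ℝ → ℝ) {x : ℝ} (hx : R < x) :
    ∫ y in t, U (x + y + a) * g y = 0 :=
  setIntegral_eq_zero_of_forall_eq_zero fun y hy => by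
    rw [hUR _ (by linarith [mem_Ici.mp (ht0 hy)]), zero_mul]

theorem setIntegral_setIntegral_comp_add_mul_mul_le (hU0 : ∀ z, 0 ≤ U z) (hUint : Integrable U)
    (hUR : ∀ z, R < z → U z = 0) (hR : 0 ≤ R) (ha : 0 ≤ a) {s t : Set ℝ} (hs : MeasurableSet s)
    (hs0 : s ⊆ Ici 0) (ht : MeasurableSet t) (ht0 : t ⊆ Ici 0) {f g : ℝ → ℝ} {A B : ℝ}
    (hA : 0 ≤ A) (hB : 0 ≤ B) (hf0 : ∀ x, 0 ≤ f x) (hfA : ∀ x ∈ Icc 0 R, f x ≤ A)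
    (hg0 : ∀ y, 0 ≤ g y) (hgB : ∀ y ∈ Icc 0 R, g y ≤ B) :
    ∫ x in s, ∫ y in t, U (x + y + a) * f x * g y ≤ A * B * R * ∫ z, U z := by
  have hfactor : ∀ x, ∫ y in t, U (x + y + a) * f x * g y
      = f x * ∫ y in t, U (x + y + a) * g y := by
    intro x
    rw [← integral_const_mul]
    congr 1 with y
    ring
  have hinner_nonneg : ∀ x, 0 ≤ ∫ y in t, U (x + y + a) * g y := fun x =>
    setIntegral_nonneg ht fun y _ => mul_nonneg (hU0 _) (hg0 y)
  simp only [hfactor]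
  calc ∫ x in s, f x * ∫ y in t, U (x + y + a) * g y ≤ A * (B * ∫ z, U z) * R :=
        setIntegral_le_mul_of_le_of_eq_zero hs hs0
          (mul_nonneg hA (mul_nonneg hB (integral_nonneg hU0))) hR
          (fun x _ => mul_nonneg (hf0 x) (hinner_nonneg x))
          (fun x hx hxR => mul_le_mul (hfA x ⟨hs0 hx, hxR⟩)
            (setIntegral_comp_add_mul_le hU0 hUint hUR ha ht ht0 hB hg0 hgB (hs0 hx))
            (hinner_nonneg x) hA)
          (fun x _ hxR => by rw [setIntegral_comp_add_mul_eq_zero hUR ha ht0 g hxR, mul_zero])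
    _ = A * B * R * ∫ z, U z := by ring

end TranslatedPotential

theorem stmt12_general
    (U : ℝ → ℝ) (hUnonneg : ∀ x, 0 ≤ U x)
    (hUint : Integrable U) (hUsupp : HasCompactSupport U) :
    ∃ C : ℝ, 0 < C ∧
      ∀ ℓ₁ ℓ₂ : ℝ, 0 < ℓ₁ → 0 < ℓ₂ → ∀ a : ℝ, 0 ≤ a →
      ∀ i j : ℕ, 1 ≤ i → 1 ≤ j →
        (1 / (ℓ₁ * ℓ₂)) * ∫ x in Set.Icc (0:ℝ) ℓ₁, ∫ y in Set.Icc (0:ℝ) ℓ₂,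
            U (x + y + a) * Real.sin ((i:ℝ) * π * x / ℓ₁) ^ 2
              * Real.sin ((j:ℝ) * π * y / ℓ₂) ^ 2
          ≤ C * min (i:ℝ) ℓ₁ ^ 2 * min (j:ℝ) ℓ₂ ^ 2 / (ℓ₁ ^ 3 * ℓ₂ ^ 3) := by
  obtain ⟨R₀, hR₀⟩ := hUsupp.isCompact.bddAbove
  set R := max R₀ 0
  have hR : 0 ≤ R := le_max_right _ _
  have hUR : ∀ z, R < z → U z = 0 := fun z hz =>
    image_eq_zero_of_notMem_tsupport fun hz' =>
      (hz.trans_le' ((hR₀ hz').trans (le_max_left _ _))).false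
  set K := max 1 ((π * R) ^ 2)
  have hsin : ∀ (k : ℝ) {ℓ : ℝ}, 0 < ℓ → ∀ t ∈ Icc 0 R,
      sin (k * π * t / ℓ) ^ 2 ≤ K * min k ℓ ^ 2 / ℓ ^ 2 := fun k ℓ hℓ t ht =>
    sin_sq_le_max_mul_min_sq_div hℓ (abs_le.mpr ⟨by linarith [ht.1, ht.2], ht.2⟩)
  have hC : 0 ≤ K ^ 2 * R * ∫ z, U z := by
    have : 0 ≤ ∫ z, U z := integral_nonneg hUnonneg
    positivity
  refine ⟨K ^ 2 * R * (∫ z, U z) + 1, by linarith, ?_⟩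
  intro ℓ₁ ℓ₂ hℓ₁ hℓ₂ a ha i j _ _
  have hI := setIntegral_setIntegral_comp_add_mul_mul_le (s := Icc 0 ℓ₁) (t := Icc 0 ℓ₂)
    hUnonneg hUint hUR hR ha measurableSet_Icc (fun x hx => hx.1) measurableSet_Icc
    (fun y hy => hy.1) (by positivity) (by positivity) (fun _ => sq_nonneg _) (hsin i hℓ₁)
    (fun _ => sq_nonneg _) (hsin j hℓ₂)
  calc (1 / (ℓ₁ * ℓ₂)) * ∫ x in Icc 0 ℓ₁, ∫ y in Icc 0 ℓ₂,
          U (x + y + a) * sin (i * π * x / ℓ₁) ^ 2 * sin (j * π * y / ℓ₂) ^ 2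
      ≤ (1 / (ℓ₁ * ℓ₂)) * (K * min (i:ℝ) ℓ₁ ^ 2 / ℓ₁ ^ 2 * (K * min (j:ℝ) ℓ₂ ^ 2 / ℓ₂ ^ 2)
          * R * ∫ z, U z) := mul_le_mul_of_nonneg_left hI (by positivity)
    _ = K ^ 2 * R * (∫ z, U z) * min (i:ℝ) ℓ₁ ^ 2 * min (j:ℝ) ℓ₂ ^ 2 / (ℓ₁ ^ 3 * ℓ₂ ^ 3) := by
        field_simp
    _ ≤ _ := by gcongr ?_ * _ * _ / _; linarith

/-- For an integrable, compactly supported nonnegative potential `U`,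
the interaction amplitude of the `i`-th and `j`-th Dirichlet levels of two pieces at
distance `a` is bounded by `C·min(i,ℓ₁)²·min(j,ℓ₂)²/(ℓ₁³ℓ₂³)`. -/
theorem stmt12
    (U : ℝ → ℝ) (hUmeas : Measurable U) (hUnonneg : ∀ x, 0 ≤ U x)
    (hUint : Integrable U) (hUsupp : HasCompactSupport U) :
    ∃ C : ℝ, 0 < C ∧
      ∀ ℓ₁ ℓ₂ : ℝ, 0 < ℓ₁ → 0 < ℓ₂ → ∀ a : ℝ, 0 ≤ a →
      ∀ i j : ℕ, 1 ≤ i → 1 ≤ j →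
        (1 / (ℓ₁ * ℓ₂)) * ∫ x in Set.Icc (0:ℝ) ℓ₁, ∫ y in Set.Icc (0:ℝ) ℓ₂,
            U (x + y + a) * Real.sin ((i:ℝ) * π * x / ℓ₁) ^ 2
              * Real.sin ((j:ℝ) * π * y / ℓ₂) ^ 2
          ≤ C * min (i:ℝ) ℓ₁ ^ 2 * min (j:ℝ) ℓ₂ ^ 2 / (ℓ₁ ^ 3 * ℓ₂ ^ 3) :=
  stmt12_general U hUnonneg hUint hUsupp
end

section
/- Let N : ℝ → ℝ be defined by N(E) := exp(−π/√E)/(1 − exp(−π/√E)) for E > 0 and N(E) := 0 for E ≤ 0; N is nondecreasing and continuous, and let ν denote its Lebesgue–Stieltjes measure. For ρ > 0 let E_ρ := π²/(log(1 + 1/ρ))², so that N(E_ρ) = ρ. Then there exist constants C > 0 and ρ₀ > 0 such that for all ρ ∈ (0, ρ₀): | ρ^{−1}·∫_{(0, E_ρ]} E dν(E) − E_ρ | ≤ C · E_ρ^{3/2}; that is, the ground-state energy per particle of the free system satisfies ρ^{−1}·∫_{(0,E_ρ]} E dν(E) = E_ρ·(1 + O(√E_ρ)) as ρ → 0⁺.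 -/
/-!
Integrating by parts against `ν = dN` gives `∫_{(0,b]} E dν = b N(b) - ∫_0^b N`, so at the
Fermi energy `b = E_ρ`, where `N(b) = ρ`, the energy per particle falls short of `E_ρ` by exactly
`ρ⁻¹ ∫_0^b N`. For `E > 0` we have `N(E) = 1/(e^{π/√E} - 1)`, and the tangent line of the convex
function `E ↦ π/√E` at `b` yields `N(t) ≤ N(b) e^{-c(b-t)}` on `(0, b]` with `c = π/(2 b^{3/2})`.
Hence `∫_0^b N ≤ ρ/c = (2/π) ρ E_ρ^{3/2}`.
-/

open MeasureTheory Real Set Filter Topology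

lemma exp_sub_one_pos {x : ℝ} (hx : 0 < x) : 0 < exp x - 1 :=
  sub_pos.2 (one_lt_exp_iff.2 hx)

lemma inv_exp_sub_one_le {x y : ℝ} (hy : 0 < y) (hyx : y ≤ x) :
    (exp x - 1)⁻¹ ≤ exp (-(x - y)) * (exp y - 1)⁻¹ := by
  have hsplit : exp (x - y) * (exp y - 1) = exp x - exp (x - y) := by
    rw [mul_sub, ← exp_add, sub_add_cancel, mul_one]
  have hpos : 0 < exp (x - y) * (exp y - 1) := mul_pos (exp_pos _) (exp_sub_one_pos hy)
  rw [exp_neg, ← mul_inv, hsplit]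
  exact inv_anti₀ (hsplit ▸ hpos) (by linarith [one_le_exp (sub_nonneg.2 hyx)])

/-- The tangent line of the convex function `t ↦ 1/√t` at `b` lies below its graph. -/
lemma sub_div_le_inv_sqrt_sub_inv_sqrt {t b : ℝ} (ht : 0 < t) (htb : t ≤ b) :
    (b - t) / (2 * b * √b) ≤ 1 / √t - 1 / √b := by
  have hb : 0 < b := ht.trans_le htb
  obtain ⟨s, hs, rfl⟩ : ∃ s, 0 < s ∧ s ^ 2 = t := ⟨√t, sqrt_pos.2 ht, sq_sqrt ht.le⟩
  obtain ⟨S, hS, rfl⟩ : ∃ S, 0 < S ∧ S ^ 2 = b := ⟨√b, sqrt_pos.2 hb, sq_sqrt hb.le⟩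
  have hsS : s ≤ S := by nlinarith
  rw [sqrt_sq hs.le, sqrt_sq hS.le, div_sub_div _ _ hs.ne' hS.ne',
    div_le_div_iff₀ (by positivity) (by positivity)]
  nlinarith [mul_nonneg (mul_nonneg (sub_nonneg.2 hsS) hS.le)
    (by nlinarith : 0 ≤ 2 * S ^ 2 - s * S - s * s)]

lemma integral_exp_mul_sub_le {c : ℝ} (hc : 0 < c) {b : ℝ} (hb : 0 ≤ b) :
    ∫ t in Ioc 0 b, exp (c * (t - b)) ≤ c⁻¹ := by
  simp_rw [mul_sub]
  rw [← intervalIntegral.integral_of_le hb,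
    intervalIntegral.integral_comp_mul_sub (fun x => exp x) hc.ne', integral_exp, sub_self,
    exp_zero, smul_eq_mul]
  exact mul_le_of_le_one_right (inv_nonneg.2 hc.le) (sub_le_self _ (exp_pos _).le)

/-- Integration by parts for the Stieltjes measure of a monotone `F`, via the layer-cake formula. -/
lemma setIntegral_Ioc_id_eq_integral_sub {F : ℝ → ℝ} (hF : Monotone F) {ν : Measure ℝ}
    (hν : ∀ a b, a ≤ b → ν (Ioc a b) = ENNReal.ofReal (F b - F a)) {b : ℝ} (hb : 0 ≤ b) :
    ∫ E in Ioc 0 b, E ∂ν = ∫ t in Ioc 0 b, (F b - F t) := by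
  have : IsFiniteMeasure (ν.restrict (Ioc 0 b)) := ⟨by simp [hν 0 b hb]⟩
  have hint : Integrable (fun E : ℝ => E) (ν.restrict (Ioc 0 b)) := by
    refine Integrable.mono' (integrable_const b) aestronglyMeasurable_id ?_
    filter_upwards [ae_restrict_mem measurableSet_Ioc] with E hE
    rw [norm_of_nonneg hE.1.le]
    exact hE.2
  have hnonneg : 0 ≤ᵐ[ν.restrict (Ioc 0 b)] fun E : ℝ => E := by
    filter_upwards [ae_restrict_mem measurableSet_Ioc] with E hE using hE.1.le
  have htail : ∀ t ∈ Ioi (0 : ℝ),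
      (ν.restrict (Ioc 0 b)).real {E | t < E} = (Iic b).indicator (fun t => F b - F t) t := by
    intro t ht
    have hIoc : Ioi t ∩ Ioc 0 b = Ioc t b := by
      ext E
      simp only [mem_inter_iff, mem_Ioi, mem_Ioc]
      constructor
      · rintro ⟨htE, -, hEb⟩; exact ⟨htE, hEb⟩
      · rintro ⟨htE, hEb⟩; exact ⟨htE, (mem_Ioi.1 ht).trans htE, hEb⟩
    change (ν.restrict (Ioc 0 b)).real (Ioi t) = _
    rw [measureReal_restrict_apply measurableSet_Ioi, hIoc, measureReal_def]
    rcases le_or_gt t b with htb | hbt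
    · rw [hν t b htb, ENNReal.toReal_ofReal (sub_nonneg.2 (hF htb)),
        indicator_of_mem (mem_Iic.2 htb)]
    · rw [Ioc_eq_empty hbt.not_gt, indicator_of_notMem (notMem_Iic.2 hbt), measure_empty,
        ENNReal.toReal_zero]
  rw [hint.integral_eq_integral_meas_lt hnonneg, setIntegral_congr_fun measurableSet_Ioi htail,
    setIntegral_indicator measurableSet_Iic, Ioi_inter_Iic]

noncomputable def luttingerSyIDS (E : ℝ) : ℝ :=
  if 0 < E then exp (-(π / √E)) / (1 - exp (-(π / √E))) else 0

lemma luttingerSyIDS_of_nonpos {E : ℝ} (hE : E ≤ 0) : luttingerSyIDS E = 0 :=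
  if_neg hE.not_gt

lemma luttingerSyIDS_of_pos {E : ℝ} (hE : 0 < E) :
    luttingerSyIDS E = (exp (π / √E) - 1)⁻¹ := by
  have h1 : 1 < exp (π / √E) := one_lt_exp_iff.2 (by positivity)
  rw [luttingerSyIDS, if_pos hE, exp_neg]
  field_simp

lemma luttingerSyIDS_nonneg (E : ℝ) : 0 ≤ luttingerSyIDS E := by
  rcases le_or_gt E 0 with hE | hE
  · rw [luttingerSyIDS_of_nonpos hE]
  · rw [luttingerSyIDS_of_pos hE]
    exact inv_nonneg.2 (exp_sub_one_pos (by positivity)).le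

lemma luttingerSyIDS_le_sqrt_div_pi (E : ℝ) : luttingerSyIDS E ≤ √E / π := by
  rcases le_or_gt E 0 with hE | hE
  · rw [luttingerSyIDS_of_nonpos hE]; positivity
  · have hx : 0 < π / √E := by positivity
    rw [luttingerSyIDS_of_pos hE, ← inv_div π]
    exact inv_anti₀ hx (by linarith [add_one_le_exp (π / √E)])

lemma monotone_luttingerSyIDS : Monotone luttingerSyIDS := by
  intro a b hab
  rcases le_or_gt a 0 with ha | ha
  · rw [luttingerSyIDS_of_nonpos ha]; exact luttingerSyIDS_nonneg b
  have hb : 0 < b := ha.trans_le hab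
  have := exp_sub_one_pos (by positivity : 0 < π / √b)
  rw [luttingerSyIDS_of_pos ha, luttingerSyIDS_of_pos hb]
  gcongr

lemma continuous_luttingerSyIDS : Continuous luttingerSyIDS := by
  refine continuous_iff_continuousAt.2 fun x => ?_
  rcases lt_trichotomy x 0 with hx | rfl | hx
  · refine (continuousAt_const (y := 0)).congr ?_
    filter_upwards [Iio_mem_nhds hx] with y hy using (luttingerSyIDS_of_nonpos hy.le).symm
  · have hlim : Tendsto (fun t => √t / π) (𝓝 0) (𝓝 0) := by
      simpa using (continuous_sqrt.div_const π).tendsto 0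
    rw [ContinuousAt, luttingerSyIDS_of_nonpos le_rfl]
    exact squeeze_zero luttingerSyIDS_nonneg luttingerSyIDS_le_sqrt_div_pi hlim
  · have hden : exp (π / √x) - 1 ≠ 0 := (exp_sub_one_pos (by positivity)).ne'
    have hsx : √x ≠ 0 := (sqrt_pos.2 hx).ne'
    refine ContinuousAt.congr ?_
      (by filter_upwards [Ioi_mem_nhds hx] with y hy using (luttingerSyIDS_of_pos hy).symm)
    fun_prop (disch := assumption)

lemma luttingerSyIDS_pi_sq_div_sq {L : ℝ} (hL : 0 < L) :
    luttingerSyIDS (π ^ 2 / L ^ 2) = (exp L - 1)⁻¹ := by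
  have hsqrt : √(π ^ 2 / L ^ 2) = π / L := by
    rw [← div_pow, sqrt_sq (by positivity)]
  rw [luttingerSyIDS_of_pos (by positivity), hsqrt, div_div_cancel₀ pi_ne_zero]

lemma luttingerSyIDS_fermiEnergy {ρ : ℝ} (hρ : 0 < ρ) :
    luttingerSyIDS (π ^ 2 / log (1 + 1 / ρ) ^ 2) = ρ := by
  have h1 : 1 < 1 + 1 / ρ := by simp [hρ]
  rw [luttingerSyIDS_pi_sq_div_sq (log_pos h1), exp_log (by linarith)]
  simp

lemma luttingerSyIDS_le_mul_exp {t b : ℝ} (ht : 0 < t) (htb : t ≤ b) :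
    luttingerSyIDS t ≤ luttingerSyIDS b * exp (π / (2 * b * √b) * (t - b)) := by
  have hb : 0 < b := ht.trans_le htb
  have hdecay : π / (2 * b * √b) * (b - t) ≤ π / √t - π / √b := by
    have := mul_le_mul_of_nonneg_left (sub_div_le_inv_sqrt_sub_inv_sqrt ht htb) pi_pos.le
    rw [mul_sub, mul_one_div, mul_one_div, ← mul_div_assoc, mul_comm π, mul_div_assoc] at this
    linarith
  have hey := exp_sub_one_pos (by positivity : 0 < π / √b)
  rw [luttingerSyIDS_of_pos ht, luttingerSyIDS_of_pos hb, mul_comm]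
  calc (exp (π / √t) - 1)⁻¹ ≤ exp (-(π / √t - π / √b)) * (exp (π / √b) - 1)⁻¹ :=
        inv_exp_sub_one_le (by positivity) (by gcongr)
    _ ≤ exp (π / (2 * b * √b) * (t - b)) * (exp (π / √b) - 1)⁻¹ :=
        mul_le_mul_of_nonneg_right (exp_le_exp.2 (by linarith)) (inv_nonneg.2 hey.le)

lemma setIntegral_Ioc_id_eq_of_luttingerSyIDS {ν : Measure ℝ}
    (hν : ∀ a b, a ≤ b → ν (Ioc a b) = ENNReal.ofReal (luttingerSyIDS b - luttingerSyIDS a))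
    {b : ℝ} (hb : 0 ≤ b) :
    ∫ E in Ioc 0 b, E ∂ν = b * luttingerSyIDS b - ∫ t in Ioc 0 b, luttingerSyIDS t := by
  rw [setIntegral_Ioc_id_eq_integral_sub monotone_luttingerSyIDS hν hb,
    integral_sub (integrable_const _) continuous_luttingerSyIDS.integrableOn_Ioc,
    setIntegral_const, volume_real_Ioc_of_le hb, sub_zero, smul_eq_mul]

lemma integral_luttingerSyIDS_le {b : ℝ} (hb : 0 < b) :
    ∫ t in Ioc 0 b, luttingerSyIDS t ≤ luttingerSyIDS b * (2 * b * √b / π) := by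
  set c := π / (2 * b * √b)
  calc ∫ t in Ioc 0 b, luttingerSyIDS t
      ≤ ∫ t in Ioc 0 b, luttingerSyIDS b * exp (c * (t - b)) :=
        setIntegral_mono_on continuous_luttingerSyIDS.integrableOn_Ioc
          (by fun_prop : Continuous fun t => luttingerSyIDS b * exp (c * (t - b))).integrableOn_Ioc
          measurableSet_Ioc fun t ht => luttingerSyIDS_le_mul_exp ht.1 ht.2
    _ = luttingerSyIDS b * ∫ t in Ioc 0 b, exp (c * (t - b)) := integral_const_mul _ _
    _ ≤ luttingerSyIDS b * c⁻¹ :=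
        mul_le_mul_of_nonneg_left (integral_exp_mul_sub_le (by positivity) hb.le)
          (luttingerSyIDS_nonneg b)
    _ = luttingerSyIDS b * (2 * b * √b / π) := by rw [inv_div]

lemma abs_inv_mul_setIntegral_Ioc_id_sub_le {ν : Measure ℝ}
    (hν : ∀ a b, a ≤ b → ν (Ioc a b) = ENNReal.ofReal (luttingerSyIDS b - luttingerSyIDS a))
    {b : ℝ} (hb : 0 < b) :
    |(luttingerSyIDS b)⁻¹ * ∫ E in Ioc 0 b, E ∂ν - b| ≤ 2 / π * b ^ ((3 : ℝ) / 2) := by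
  have hNb : 0 < luttingerSyIDS b := by
    rw [luttingerSyIDS_of_pos hb]
    exact inv_pos.2 (exp_sub_one_pos (by positivity))
  have hI₀ : 0 ≤ ∫ t in Ioc 0 b, luttingerSyIDS t :=
    setIntegral_nonneg measurableSet_Ioc fun t _ => luttingerSyIDS_nonneg t
  have hrpow : b ^ ((3 : ℝ) / 2) = b * √b := by
    rw [sqrt_eq_rpow, ← rpow_one_add' hb.le (by norm_num)]
    norm_num
  rw [setIntegral_Ioc_id_eq_of_luttingerSyIDS hν hb.le, mul_sub, mul_left_comm,
    inv_mul_cancel₀ hNb.ne', mul_one, sub_sub_cancel_left, abs_neg, abs_of_nonneg (by positivity),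
    inv_mul_le_iff₀ hNb, hrpow]
  calc ∫ t in Ioc 0 b, luttingerSyIDS t ≤ luttingerSyIDS b * (2 * b * √b / π) :=
        integral_luttingerSyIDS_le hb
    _ = luttingerSyIDS b * (2 / π * (b * √b)) := by ring

/-- Let `N` be the integrated density of states of the Luttinger–Sy
model (Poisson intensity 1): `N(E) = e^{−π/√E}/(1 − e^{−π/√E})` for `E > 0`, `N(E) = 0`
for `E ≤ 0`. Then `N` is nondecreasing and continuous, and for its Lebesgue–Stieltjes
measure `ν` and the Fermi energy `E_ρ = π²/(log(1+1/ρ))²`, the free ground-state energy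
per particle satisfies `ρ⁻¹·∫_{(0,E_ρ]} E dν = E_ρ·(1 + O(√E_ρ))` as `ρ → 0⁺`. -/
theorem stmt19
    (N : ℝ → ℝ)
    (hN : ∀ E : ℝ, N E =
      if 0 < E then
        Real.exp (-(π / Real.sqrt E)) / (1 - Real.exp (-(π / Real.sqrt E)))
      else 0) :
    Monotone N ∧ Continuous N ∧
      ∀ ν : Measure ℝ,
        (∀ a b : ℝ, a ≤ b → ν (Set.Ioc a b) = ENNReal.ofReal (N b - N a)) →
        ∃ C : ℝ, 0 < C ∧ ∃ ρ₀ : ℝ, 0 < ρ₀ ∧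
          ∀ ρ : ℝ, 0 < ρ → ρ < ρ₀ →
            |ρ⁻¹ * (∫ E in Set.Ioc (0:ℝ) (π ^ 2 / (Real.log (1 + 1 / ρ)) ^ 2), E ∂ν)
                - π ^ 2 / (Real.log (1 + 1 / ρ)) ^ 2|
              ≤ C * (π ^ 2 / (Real.log (1 + 1 / ρ)) ^ 2) ^ ((3:ℝ) / 2) := by
  obtain rfl : N = luttingerSyIDS := funext hN
  refine ⟨monotone_luttingerSyIDS, continuous_luttingerSyIDS, fun ν hν =>
    ⟨1, one_pos, 1, one_pos, fun ρ hρ _ => ?_⟩⟩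
  have hL : 0 < log (1 + 1 / ρ) := log_pos (by simp [hρ])
  have hb : 0 < π ^ 2 / log (1 + 1 / ρ) ^ 2 := by positivity
  calc _ ≤ 2 / π * (π ^ 2 / log (1 + 1 / ρ) ^ 2) ^ ((3 : ℝ) / 2) := by
        simpa only [luttingerSyIDS_fermiEnergy hρ] using
          abs_inv_mul_setIntegral_Ioc_id_sub_le hν hb
    _ ≤ 1 * (π ^ 2 / log (1 + 1 / ρ) ^ 2) ^ ((3 : ℝ) / 2) := by
        gcongr
        exact (div_le_one pi_pos).2 two_le_pi
end
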